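/- arXiv:1106.3512 — 8 statements merged into one kernel-verified Lean document; each statement's English description precedes it below -/
import Mathlib

section
/- Let L be the operator acting on functions f: ℝ → ℝ by (Lf)(x) = F(x)(f(x) - f(-x)) + G(x)(f(-x-1) - f(x)), where F(x) = (x-ρ₁)(x-ρ₂)/(2x) and G(x) = (x-r₁+1/2)(x-r₂+1/2)/(2x+1). Then for every polynomial p of degree n, Lp is a polynomial of degree at most n, with leading coefficient λₙ times that of p, where λₙ = n/2 if n is even and λₙ = r₁+r₂-ρ₁-ρ₂-(n+1)/2 if n is odd. -/
open Polynomial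

/-- The functions entering the Bannai–Ito Dunkl shift operator. -/
noncomputable def biF (ρ₁ ρ₂ x : ℝ) : ℝ := (x - ρ₁) * (x - ρ₂) / (2 * x)

noncomputable def biG (r₁ r₂ x : ℝ) : ℝ := (x - r₁ + 1/2) * (x - r₂ + 1/2) / (2 * x + 1)

/-- The Bannai–Ito Dunkl shift operator. -/
noncomputable def biL (r₁ r₂ ρ₁ ρ₂ : ℝ) (f : ℝ → ℝ) (x : ℝ) : ℝ :=
  biF ρ₁ ρ₂ x * (f x - f (-x)) + biG r₁ r₂ x * (f (-x - 1) - f x)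

/-- The eigenvalue λₙ. -/
noncomputable def biLam (r₁ r₂ ρ₁ ρ₂ : ℝ) (n : ℕ) : ℝ :=
  if Even n then (n : ℝ) / 2 else r₁ + r₂ - ρ₁ - ρ₂ - ((n : ℝ) + 1) / 2

/-!
Write `A = p(x) - p(-x)` and `B = p(-x-1) - p(x)`. They vanish at `0` and `-1/2`, so
`Lp = ½ (x-ρ₁)(x-ρ₂) A/x + ½ (x-r₁+½)(x-r₂+½) B/(x+½)` is a polynomial. To read off its top
coefficient, clear denominators: `2x(x+½) Lp = (x+½)(x-ρ₁)(x-ρ₂) A + x(x-r₁+½)(x-r₂+½) B`.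
If `p` has degree `n` and coefficients `a, b` in degrees `n, n-1`, then `A` and `B` have degree at
most `n`, with coefficients `(1-(-1)ⁿ) a` and `-(1-(-1)ⁿ) a` in degree `n`, and `(1+(-1)ⁿ) b` and
`-(1+(-1)ⁿ) b + (-1)ⁿ n a` in degree `n-1`. So the right-hand side has no term of degree `n+3`,
and `b` drops out of its coefficient of degree `n+2`, which is `2λₙ a`.
-/

namespace Polynomial

variable {R : Type*} [CommRing R]

theorem coeff_comp_neg_X (p : R[X]) (n : ℕ) :
    (p.comp (-X)).coeff n = (-1) ^ n * p.coeff n := by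
  induction p using Polynomial.induction_on' with
  | add p q hp hq => rw [add_comp, coeff_add, hp, hq, coeff_add, mul_add]
  | monomial k c =>
    rw [monomial_comp, neg_pow, show (-1 : R[X]) ^ k = C ((-1) ^ k) by simp, coeff_C_mul,
      coeff_C_mul_X_pow, coeff_monomial]
    split_ifs <;> simp_all [mul_comm]

def HasTopCoeffs (f : R[X]) (m : ℕ) (a b : R) : Prop :=
  f.natDegree ≤ m + 1 ∧ f.coeff (m + 1) = a ∧ f.coeff m = b

namespace HasTopCoeffs

variable {f g : R[X]} {m : ℕ} {a b a' b' : R}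

theorem add (hf : HasTopCoeffs f m a b) (hg : HasTopCoeffs g m a' b') :
    HasTopCoeffs (f + g) m (a + a') (b + b') :=
  ⟨natDegree_add_le_of_degree_le hf.1 hg.1, by rw [coeff_add, hf.2.1, hg.2.1],
    by rw [coeff_add, hf.2.2, hg.2.2]⟩

theorem sub (hf : HasTopCoeffs f m a b) (hg : HasTopCoeffs g m a' b') :
    HasTopCoeffs (f - g) m (a - a') (b - b') :=
  ⟨(natDegree_sub_le_of_le hf.1 hg.1).trans_eq (max_self _), by rw [coeff_sub, hf.2.1, hg.2.1],
    by rw [coeff_sub, hf.2.2, hg.2.2]⟩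

theorem C_mul (hf : HasTopCoeffs f m a b) (c : R) : HasTopCoeffs (C c * f) m (c * a) (c * b) :=
  ⟨(natDegree_C_mul_le c f).trans hf.1, by rw [coeff_C_mul, hf.2.1],
    by rw [coeff_C_mul, hf.2.2]⟩

theorem mul_X (hf : HasTopCoeffs f m a b) : HasTopCoeffs (f * X) (m + 1) a b :=
  ⟨natDegree_mul_le_of_le hf.1 natDegree_X_le, by rw [coeff_mul_X, hf.2.1],
    by rw [coeff_mul_X, hf.2.2]⟩

theorem mul_X_sub_C (hf : HasTopCoeffs f m a b) (c : R) :
    HasTopCoeffs (f * (X - C c)) (m + 1) a (b - a * c) := by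
  have hzero : f.coeff (m + 2) = 0 := coeff_eq_zero_of_natDegree_lt (by linarith [hf.1])
  refine ⟨natDegree_mul_le_of_le hf.1 (natDegree_X_sub_C_le c), ?_, ?_⟩
  · rw [coeff_mul_X_sub_C, hf.2.1, hzero, zero_mul, sub_zero]
  · rw [coeff_mul_X_sub_C, hf.2.1, hf.2.2]

theorem of_mul_X_sub_C [Nontrivial R] {c : R} (h : HasTopCoeffs (f * (X - C c)) (m + 1) a b) :
    HasTopCoeffs f m a (b + a * c) := by
  have hdeg : f.natDegree ≤ m + 1 := by
    rcases eq_or_ne f 0 with rfl | hf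
    · simp
    have := h.1
    rw [← (monic_X_sub_C c).natDegree_mul_comm, (monic_X_sub_C c).natDegree_mul' hf,
      natDegree_X_sub_C] at this
    omega
  have ha : f.coeff (m + 1) = a := by
    rw [← h.2.1, coeff_mul_X_sub_C, coeff_eq_zero_of_natDegree_lt (n := m + 1 + 1) (by omega),
      zero_mul, sub_zero]
  refine ⟨hdeg, ha, ?_⟩
  rw [← h.2.2, coeff_mul_X_sub_C, ha, sub_add_cancel]

theorem of_mul_X [Nontrivial R] (h : HasTopCoeffs (f * X) (m + 1) a b) : HasTopCoeffs f m a b := by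
  simpa using (show HasTopCoeffs (f * (X - C 0)) (m + 1) a b by simpa using h).of_mul_X_sub_C

theorem comp_neg_X (hf : HasTopCoeffs f m a b) :
    HasTopCoeffs (f.comp (-X)) m ((-1) ^ (m + 1) * a) ((-1) ^ m * b) := by
  refine ⟨?_, by rw [coeff_comp_neg_X, hf.2.1], by rw [coeff_comp_neg_X, hf.2.2]⟩
  rw [natDegree_le_iff_coeff_eq_zero]
  intro N hN
  rw [coeff_comp_neg_X, coeff_eq_zero_of_natDegree_lt (hf.1.trans_lt hN), mul_zero]

theorem taylor (hf : HasTopCoeffs f m a b) (c : R) :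
    HasTopCoeffs (taylor c f) m a (b + (m + 1) * c * a) := by
  have hdeg := hf.1
  have hconst : (hasseDeriv (m + 1) f).natDegree ≤ 0 :=
    (natDegree_hasseDeriv_le f (m + 1)).trans (by omega)
  have hlin : (hasseDeriv m f).natDegree ≤ 1 := (natDegree_hasseDeriv_le f m).trans (by omega)
  refine ⟨(natDegree_taylor f c).trans_le hdeg, ?_, ?_⟩
  · rw [taylor_coeff, eq_C_of_natDegree_le_zero hconst, eval_C, hasseDeriv_coeff, zero_add,
      Nat.choose_self, Nat.cast_one, one_mul, hf.2.1]
  · rw [taylor_coeff, eq_X_add_C_of_natDegree_le_one hlin]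
    simp only [eval_add, eval_mul, eval_C, eval_X, hasseDeriv_coeff, zero_add,
      Nat.choose_self, add_comm 1 m, Nat.choose_succ_self_right, hf.2.1, hf.2.2]
    push_cast
    ring

theorem natDegree_le (h : HasTopCoeffs f m 0 b) : f.natDegree ≤ m := by
  rw [natDegree_le_iff_coeff_eq_zero]
  intro N hN
  rcases (Nat.succ_le_of_lt hN).eq_or_lt with rfl | hlt
  · exact h.2.1
  · exact coeff_eq_zero_of_natDegree_lt (h.1.trans_lt hlt)

end HasTopCoeffs

theorem divX_sub_comp_neg_X_mul_X (p : R[X]) : divX (p - p.comp (-X)) * X = p - p.comp (-X) := by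
  have h := divX_mul_X_add (p - p.comp (-X))
  rwa [coeff_zero_eq_eval_zero, eval_sub, eval_comp, eval_neg, eval_X, neg_zero, sub_self,
    C_0, add_zero] at h

theorem comp_neg_X_sub_one_eq_taylor (p : R[X]) : p.comp (-X - 1) = taylor 1 (p.comp (-X)) := by
  rw [taylor_apply, comp_assoc, C_1, neg_comp, X_comp, sub_eq_add_neg, neg_add]

end Polynomial

/-- The polynomial `x ↦ Lp(x)`; both divisions are exact. -/
noncomputable def biLPoly (r₁ r₂ ρ₁ ρ₂ : ℝ) (p : ℝ[X]) : ℝ[X] :=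
  C (1 / 2) * ((X - C ρ₁) * (X - C ρ₂) * divX (p - p.comp (-X)) +
    (X - C (r₁ - 1 / 2)) * (X - C (r₂ - 1 / 2)) * ((p.comp (-X - 1) - p) /ₘ (X - C (-1 / 2))))

noncomputable def biLNumerator (r₁ r₂ ρ₁ ρ₂ : ℝ) (p : ℝ[X]) : ℝ[X] :=
  (p - p.comp (-X)) * (X - C (-1 / 2)) * (X - C ρ₁) * (X - C ρ₂) +
    (p.comp (-X - 1) - p) * X * (X - C (r₁ - 1 / 2)) * (X - C (r₂ - 1 / 2))

section

variable (r₁ r₂ ρ₁ ρ₂ : ℝ) (p : ℝ[X])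

theorem divByMonic_mul_X_add_half :
    (p.comp (-X - 1) - p) /ₘ (X - C (-1 / 2)) * (X - C (-1 / 2)) = p.comp (-X - 1) - p := by
  rw [mul_comm, mul_divByMonic_eq_iff_isRoot, IsRoot, eval_sub, eval_comp]
  norm_num

theorem eval_biLPoly {x : ℝ} (hx : x ≠ 0) (hx' : 2 * x + 1 ≠ 0) :
    (biLPoly r₁ r₂ ρ₁ ρ₂ p).eval x = biL r₁ r₂ ρ₁ ρ₂ (fun t => p.eval t) x := by
  have hA := congrArg (eval x) (divX_sub_comp_neg_X_mul_X p)
  have hB := congrArg (eval x) (divByMonic_mul_X_add_half p)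
  simp only [eval_mul, eval_sub, eval_comp, eval_neg, eval_X, eval_one, eval_C] at hA hB
  simp only [biLPoly, biL, biF, biG, eval_mul, eval_add, eval_sub, eval_X, eval_C]
  rw [← hA, ← hB]
  field_simp
  ring

theorem biLPoly_C (c : ℝ) : biLPoly r₁ r₂ ρ₁ ρ₂ (C c) = 0 := by
  simp [biLPoly]

theorem biLPoly_mul_X_mul_X_add_half :
    biLPoly r₁ r₂ ρ₁ ρ₂ p * X * (X - C (-1 / 2)) = C (1 / 2) * biLNumerator r₁ r₂ ρ₁ ρ₂ p := by
  rw [biLNumerator, ← divX_sub_comp_neg_X_mul_X p, ← divByMonic_mul_X_add_half p, biLPoly]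
  ring

theorem hasTopCoeffs_biLNumerator {m : ℕ} (hp : p.natDegree ≤ m + 1) :
    HasTopCoeffs (biLNumerator r₁ r₂ ρ₁ ρ₂ p) (m + 3)
      0 (2 * biLam r₁ r₂ ρ₁ ρ₂ (m + 1) * p.coeff (m + 1)) := by
  have hp' : HasTopCoeffs p m (p.coeff (m + 1)) (p.coeff m) := ⟨hp, rfl, rfl⟩
  have hneg := hp'.comp_neg_X
  have hshift := hneg.taylor 1
  rw [← comp_neg_X_sub_one_eq_taylor] at hshift
  have hA := (((hp'.sub hneg).mul_X_sub_C (-1 / 2)).mul_X_sub_C ρ₁).mul_X_sub_C ρ₂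
  have hB := (((hshift.sub hp').mul_X).mul_X_sub_C (r₁ - 1 / 2)).mul_X_sub_C (r₂ - 1 / 2)
  rw [biLNumerator]
  convert hA.add hB using 1
  · ring
  · rcases Nat.even_or_odd m with hm | hm
    · simp only [biLam, Nat.even_add_one, hm, not_true_eq_false, if_false, pow_succ,
        hm.neg_one_pow]
      push_cast; ring
    · simp only [biLam, Nat.even_add_one, Nat.not_even_iff_odd.mpr hm, not_false_eq_true, if_true,
        pow_succ, hm.neg_one_pow]
      push_cast; ring

theorem hasTopCoeffs_biLPoly {m : ℕ} (hp : p.natDegree ≤ m + 1) :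
    HasTopCoeffs (biLPoly r₁ r₂ ρ₁ ρ₂ p) (m + 1)
      0 (biLam r₁ r₂ ρ₁ ρ₂ (m + 1) * p.coeff (m + 1)) := by
  have h := (hasTopCoeffs_biLNumerator r₁ r₂ ρ₁ ρ₂ p hp).C_mul (1 / 2)
  rw [← biLPoly_mul_X_mul_X_add_half] at h
  convert h.of_mul_X_sub_C.of_mul_X using 1 <;> ring

end

theorem stmt0_general (r₁ r₂ ρ₁ ρ₂ : ℝ) (p : Polynomial ℝ) :
    ∃ q : Polynomial ℝ,
      (∀ x : ℝ, x ≠ 0 → 2 * x + 1 ≠ 0 →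
        q.eval x = biL r₁ r₂ ρ₁ ρ₂ (fun t => p.eval t) x) ∧
      q.degree ≤ p.degree ∧
      q.coeff p.natDegree = biLam r₁ r₂ ρ₁ ρ₂ p.natDegree * p.leadingCoeff := by
  refine ⟨biLPoly r₁ r₂ ρ₁ ρ₂ p, fun x hx hx' => eval_biLPoly r₁ r₂ ρ₁ ρ₂ p hx hx', ?_⟩
  by_cases h0 : p.natDegree = 0
  · rw [eq_C_of_natDegree_eq_zero h0, biLPoly_C]
    simp [biLam]
  obtain ⟨m, hm⟩ := Nat.exists_eq_add_one_of_ne_zero h0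
  have hq := hasTopCoeffs_biLPoly r₁ r₂ ρ₁ ρ₂ p hm.le
  have hp0 : p ≠ 0 := fun h => h0 (by rw [h, natDegree_zero])
  rw [degree_eq_natDegree hp0, leadingCoeff, hm]
  exact ⟨degree_le_of_natDegree_le hq.natDegree_le, hq.2.2⟩

/-- L maps any polynomial of degree n to a polynomial of degree at most n whose
coefficient of degree n is λₙ times the leading coefficient of p. -/
theorem stmt0 (r₁ r₂ ρ₁ ρ₂ : ℝ) (p : Polynomial ℝ) (hp : p ≠ 0) :
    ∃ q : Polynomial ℝ,
      (∀ x : ℝ, x ≠ 0 → 2 * x + 1 ≠ 0 →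
        q.eval x = biL r₁ r₂ ρ₁ ρ₂ (fun t => p.eval t) x) ∧
      q.degree ≤ p.degree ∧
      q.coeff p.natDegree = biLam r₁ r₂ ρ₁ ρ₂ p.natDegree * p.leadingCoeff :=
  stmt0_general r₁ r₂ ρ₁ ρ₂ p
end

section
/- With L as above and the basis φ₂ₙ(x) = (x-r₁+1/2)ₙ(-x-r₁+1/2)ₙ, φ₂ₙ₊₁(x) = (x-r₁+1/2)ₙ₊₁(-x-r₁+1/2)ₙ (Pochhammer symbols), the operator L is two-diagonal: L φₙ = λₙ φₙ + νₙ φₙ₋₁, where λₙ is as in the previous statement, νₙ = (n/2)(r₁+r₂-n/2) for even n, and νₙ = (ρ₁-r₁+n/2)(ρ₂-r₁+n/2) for odd n. -/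
/-- The shifted factorial (Pochhammer symbol) (a)ₙ = a(a+1)⋯(a+n-1). -/
noncomputable def poch (a : ℝ) (n : ℕ) : ℝ := ∏ i ∈ Finset.range n, (a + i)

/-- The two-diagonal basis: φ₂ₙ = (x-r₁+1/2)ₙ(-x-r₁+1/2)ₙ,
φ₂ₙ₊₁ = (x-r₁+1/2)ₙ₊₁(-x-r₁+1/2)ₙ. -/
noncomputable def biPhi (r₁ : ℝ) (n : ℕ) (x : ℝ) : ℝ :=
  if Even n then poch (x - r₁ + 1/2) (n / 2) * poch (-x - r₁ + 1/2) (n / 2)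
  else poch (x - r₁ + 1/2) (n / 2 + 1) * poch (-x - r₁ + 1/2) (n / 2)

noncomputable def biNu (r₁ r₂ ρ₁ ρ₂ : ℝ) (n : ℕ) : ℝ :=
  if Even n then ((n : ℝ) / 2) * (r₁ + r₂ - (n : ℝ) / 2)
  else (ρ₁ - r₁ + (n : ℝ) / 2) * (ρ₂ - r₁ + (n : ℝ) / 2)

/-! Write `a = x - r₁ + 1/2`, `b = -x - r₁ + 1/2`. The reflection `x ↦ -x` swaps `a` and `b`, and
`x ↦ -x - 1` sends `(a, b)` to `(b - 1, a + 1)`. So the even `φₙ` are killed by the `F`-part, and in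
each difference of `L` the common Pochhammer factors come out, leaving a linear factor `a - b = 2x`
or `b - 1 - a = -(2x + 1)` that cancels the denominator of `F` or `G`. The recurrences
`φ₂ₖ₊₁ = (a + k) φ₂ₖ` and `φ₂ₖ₊₂ = (b + k) φ₂ₖ₊₁` then identify `λₙ` and `νₙ`. -/

lemma poch_succ (a : ℝ) (k : ℕ) : poch a (k + 1) = poch a k * (a + k) :=
  Finset.prod_range_succ _ _

lemma poch_succ' (a : ℝ) (k : ℕ) : poch a (k + 1) = a * poch (a + 1) k := by
  rw [poch, Finset.prod_range_succ', mul_comm, poch]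
  push_cast
  simp only [add_zero, add_assoc, add_comm (1 : ℝ)]

lemma poch_succ_mul_sub_poch_succ_mul (a b : ℝ) (k : ℕ) :
    poch a (k + 1) * poch b k - poch b (k + 1) * poch a k = (a - b) * (poch a k * poch b k) := by
  rw [poch_succ, poch_succ]
  ring

lemma poch_sub_one_mul_poch_add_one_sub (a b : ℝ) (k : ℕ) :
    poch (b - 1) (k + 1) * poch (a + 1) k - poch a (k + 1) * poch b k
      = (b - 1 - a) * (poch (a + 1) k * poch b k) := by
  rw [poch_succ' (b - 1), poch_succ' a, sub_add_cancel]
  ring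

lemma poch_sub_one_succ_mul_poch_add_one_succ_sub (a b : ℝ) (k : ℕ) :
    poch (b - 1) (k + 1) * poch (a + 1) (k + 1) - poch a (k + 1) * poch b (k + 1)
      = (k + 1) * (b - 1 - a) * (poch (a + 1) k * poch b k) := by
  rw [poch_succ' (b - 1), poch_succ' a, sub_add_cancel, poch_succ (a + 1), poch_succ b]
  ring

section BasisFunctions

variable (r₁ : ℝ)

lemma biPhi_two_mul (k : ℕ) (x : ℝ) :
    biPhi r₁ (2 * k) x = poch (x - r₁ + 1/2) k * poch (-x - r₁ + 1/2) k := by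
  simp [biPhi]

lemma biPhi_two_mul_add_one (k : ℕ) (x : ℝ) :
    biPhi r₁ (2 * k + 1) x = poch (x - r₁ + 1/2) (k + 1) * poch (-x - r₁ + 1/2) k := by
  simp [biPhi, Nat.mul_add_div]

lemma biPhi_two_mul_add_one_eq_mul (k : ℕ) (x : ℝ) :
    biPhi r₁ (2 * k + 1) x = (x - r₁ + 1/2 + k) * biPhi r₁ (2 * k) x := by
  rw [biPhi_two_mul_add_one, biPhi_two_mul, poch_succ]
  ring

lemma biPhi_two_mul_add_two_eq_mul (k : ℕ) (x : ℝ) :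
    biPhi r₁ (2 * k + 2) x = (-x - r₁ + 1/2 + k) * biPhi r₁ (2 * k + 1) x := by
  rw [show 2 * k + 2 = 2 * (k + 1) by ring, biPhi_two_mul, biPhi_two_mul_add_one,
    poch_succ (-x - r₁ + 1/2)]
  ring

lemma biPhi_two_mul_neg (k : ℕ) (x : ℝ) : biPhi r₁ (2 * k) (-x) = biPhi r₁ (2 * k) x := by
  rw [biPhi_two_mul, biPhi_two_mul, neg_neg, mul_comm]

end BasisFunctions

section Operator

variable (r₁ r₂ ρ₁ ρ₂ : ℝ)

lemma biL_biPhi_two_mul_add_two (k : ℕ) {x : ℝ} (hx : 2 * x + 1 ≠ 0) :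
    biL r₁ r₂ ρ₁ ρ₂ (biPhi r₁ (2 * k + 2)) x
      = -(k + 1) * (x - r₂ + 1/2) * biPhi r₁ (2 * k + 1) x := by
  rw [show 2 * k + 2 = 2 * (k + 1) by ring]
  have hshift : biPhi r₁ (2 * (k + 1)) (-x - 1) - biPhi r₁ (2 * (k + 1)) x
      = (k + 1) * -(2 * x + 1) * (poch (x - r₁ + 1/2 + 1) k * poch (-x - r₁ + 1/2) k) := by
    rw [biPhi_two_mul, biPhi_two_mul,
      show -x - 1 - r₁ + 1/2 = (-x - r₁ + 1/2) - 1 by ring,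
      show -(-x - 1) - r₁ + 1/2 = (x - r₁ + 1/2) + 1 by ring,
      poch_sub_one_succ_mul_poch_add_one_succ_sub]
    ring
  rw [biL, biPhi_two_mul_neg, sub_self, mul_zero, zero_add, hshift, biPhi_two_mul_add_one,
    poch_succ', biG, div_mul_eq_mul_div, div_eq_iff hx]
  ring

lemma biL_biPhi_two_mul_add_one (k : ℕ) {x : ℝ} (hx : x ≠ 0) (hx' : 2 * x + 1 ≠ 0) :
    biL r₁ r₂ ρ₁ ρ₂ (biPhi r₁ (2 * k + 1)) x
      = (x - ρ₁) * (x - ρ₂) * biPhi r₁ (2 * k) x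
        - (x - r₂ + 1/2) * biPhi r₁ (2 * k + 1) x := by
  have hF : biF ρ₁ ρ₂ x * (biPhi r₁ (2 * k + 1) x - biPhi r₁ (2 * k + 1) (-x))
      = (x - ρ₁) * (x - ρ₂) * biPhi r₁ (2 * k) x := by
    rw [biPhi_two_mul_add_one, biPhi_two_mul_add_one, biPhi_two_mul, neg_neg,
      poch_succ_mul_sub_poch_succ_mul, biF, div_mul_eq_mul_div,
      div_eq_iff (mul_ne_zero two_ne_zero hx)]
    ring
  have hG : biG r₁ r₂ x * (biPhi r₁ (2 * k + 1) (-x - 1) - biPhi r₁ (2 * k + 1) x)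
      = -(x - r₂ + 1/2) * biPhi r₁ (2 * k + 1) x := by
    rw [biPhi_two_mul_add_one, biPhi_two_mul_add_one,
      show -x - 1 - r₁ + 1/2 = (-x - r₁ + 1/2) - 1 by ring,
      show -(-x - 1) - r₁ + 1/2 = (x - r₁ + 1/2) + 1 by ring,
      poch_sub_one_mul_poch_add_one_sub, poch_succ', biG, div_mul_eq_mul_div, div_eq_iff hx']
    ring
  rw [biL, hF, hG]
  ring

end Operator

/-- The operator L is lower two-diagonal in the basis φₙ:
L φₙ = λₙ φₙ + νₙ φₙ₋₁. -/
theorem stmt1 (r₁ r₂ ρ₁ ρ₂ : ℝ) :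
    ∀ n : ℕ, 1 ≤ n → ∀ x : ℝ, x ≠ 0 → 2 * x + 1 ≠ 0 →
      biL r₁ r₂ ρ₁ ρ₂ (biPhi r₁ n) x =
        biLam r₁ r₂ ρ₁ ρ₂ n * biPhi r₁ n x
          + biNu r₁ r₂ ρ₁ ρ₂ n * biPhi r₁ (n - 1) x := by
  intro n hn x hx hx'
  obtain ⟨k, rfl | rfl⟩ : ∃ k, n = 2 * k + 2 ∨ n = 2 * k + 1 := by
    rcases n.even_or_odd' with ⟨m, rfl | rfl⟩
    · exact ⟨m - 1, Or.inl (by omega)⟩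
    · exact ⟨m, Or.inr rfl⟩
  · have heven : Even (2 * k + 2) := ⟨k + 1, by ring⟩
    rw [biL_biPhi_two_mul_add_two r₁ r₂ ρ₁ ρ₂ k hx', biPhi_two_mul_add_two_eq_mul,
      show 2 * k + 2 - 1 = 2 * k + 1 by omega]
    simp only [biLam, biNu, if_pos heven]
    push_cast
    ring
  · rw [biL_biPhi_two_mul_add_one r₁ r₂ ρ₁ ρ₂ k hx hx', biPhi_two_mul_add_one_eq_mul,
      Nat.add_sub_cancel]
    simp only [biLam, biNu, if_neg (Nat.not_even_two_mul_add_one k)]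
    push_cast
    ring
end

section
/- Suppose L is a linear operator on polynomials, λₙ are pairwise distinct scalars, and (φₙ) is a basis of monic-up-to-sign polynomials of degree n such that L φₙ = λₙ φₙ + νₙ φₙ₋₁. Then for each n there exists a unique polynomial Pₙ of degree n with leading coefficient equal to that of a prescribed normalization, satisfying L Pₙ = λₙ Pₙ, and its expansion coefficients Aₙₛ in Pₙ = Σ_{s=0}^{n} Aₙₛ φₛ satisfy A_{n,s+1} = Aₙₛ(λₙ-λₛ)/ν_{s+1}, hence Aₙₛ = A_{n0} ∏_{j=0}^{s-1}(λₙ-λⱼ)/∏_{j=1}^{s} νⱼ (assuming νⱼ ≠ 0 for 1 ≤ j ≤ n). -/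
/-!
In the basis `φ`, the operator `L` acts on coordinates by `c ↦ (λₛ cₛ + νₛ₊₁ cₛ₊₁)ₛ`, so
`L P = μ P` is the two-term recurrence `cₛ₊₁ νₛ₊₁ = cₛ (μ - λₛ)`. At `s = deg P` it forces
`μ = λ_{deg P}`. Hence two eigenpolynomials for `λₙ` of degree `n` with the same leading
coefficient differ by an eigenpolynomial for `λₙ` of degree `< n`, which must vanish since the
`λ` are distinct. For existence, solve the recurrence downward from `cₙ = 1`, dividing only by
`λₙ - λₛ ≠ 0`; solving it upward from `c₀`, dividing by the `ν`, gives the product formula.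
-/

open Polynomial Finset Module

def IsBidiagonal {R M : Type*} [Semiring R] [AddCommMonoid M] [Module R M] (b : ℕ → M)
    (L : M →ₗ[R] M) (lam nu : ℕ → R) : Prop :=
  L (b 0) = lam 0 • b 0 ∧ ∀ n, L (b (n + 1)) = lam (n + 1) • b (n + 1) + nu (n + 1) • b n

namespace Module.Basis

variable {R M : Type*} [CommRing R] [AddCommGroup M] [Module R M] (b : Basis ℕ R M)
  {L : M →ₗ[R] M} {lam nu : ℕ → R}

lemma repr_sum_range_smul (A : ℕ → R) (n s : ℕ) :
    b.repr (∑ t ∈ range n, A t • b t) s = if s < n then A s else 0 := by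
  simp [Finsupp.single_apply]

lemma repr_apply_of_isBidiagonal (hL : IsBidiagonal b L lam nu) (x : M) (s : ℕ) :
    b.repr (L x) s = lam s * b.repr x s + nu (s + 1) * b.repr x (s + 1) := by
  let coord (i : ℕ) : M →ₗ[R] R := Finsupp.lapply i ∘ₗ b.repr.toLinearMap
  suffices coord s ∘ₗ L = lam s • coord s + nu (s + 1) • coord (s + 1) from
    LinearMap.congr_fun this x
  refine b.ext fun n => ?_
  rcases n with _ | n <;> simp [coord, hL.1, hL.2, Finsupp.single_apply] <;> grind

lemma apply_eq_smul_iff_of_isBidiagonal (hL : IsBidiagonal b L lam nu) (x : M) (μ : R) :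
    L x = μ • x ↔ ∀ s, b.repr x (s + 1) * nu (s + 1) = b.repr x s * (μ - lam s) := by
  simp only [b.ext_elem_iff, b.repr_apply_of_isBidiagonal hL, map_smul, Finsupp.smul_apply,
    smul_eq_mul]
  exact forall_congr' fun s => by constructor <;> intro h <;> linear_combination h

end Module.Basis

namespace Polynomial.Sequence

variable {K : Type*} [Field K] (S : Sequence K)

lemma isUnit_leadingCoeff (n : ℕ) : IsUnit (S n).leadingCoeff :=
  (leadingCoeff_ne_zero.2 (S.ne_zero n)).isUnit

noncomputable def fieldBasis : Basis ℕ K K[X] := S.basis S.isUnit_leadingCoeff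

@[simp]
lemma fieldBasis_apply (n : ℕ) : S.fieldBasis n = S n := S.basis_eq_self _ n

lemma degree_sum_range_smul_lt (A : ℕ → K) (n : ℕ) :
    (∑ s ∈ range n, A s • S s).degree < n := by
  rw [← mem_degreeLT, ← S.span_degreeLT fun i _ => S.isUnit_leadingCoeff i]
  exact Submodule.sum_mem _ fun s hs =>
    Submodule.smul_mem _ _ (Submodule.subset_span ⟨s, by simpa using hs, rfl⟩)

lemma fieldBasis_repr_sum_range_smul (A : ℕ → K) (n s : ℕ) :
    S.fieldBasis.repr (∑ t ∈ range n, A t • S t) s = if s < n then A s else 0 := by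
  simpa using S.fieldBasis.repr_sum_range_smul A n s

lemma mem_degreeLT_iff_fieldBasis_repr_eq_zero {P : K[X]} {n : ℕ} :
    P ∈ degreeLT K n ↔ ∀ s, n ≤ s → S.fieldBasis.repr P s = 0 := by
  have himage : S.fieldBasis '' Set.Iio n = S '' Set.Iio n := by simp
  rw [← S.span_degreeLT fun i _ => S.isUnit_leadingCoeff i, ← himage, Basis.mem_span_image]
  simp only [Set.subset_def, Finset.mem_coe, Finsupp.mem_support_iff, Set.mem_Iio]
  exact forall_congr' fun s => by rw [not_imp_comm, not_lt]

lemma fieldBasis_repr_eq_zero_of_degree_lt {P : K[X]} {s : ℕ} (h : P.degree < s) :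
    S.fieldBasis.repr P s = 0 :=
  S.mem_degreeLT_iff_fieldBasis_repr_eq_zero.1 (mem_degreeLT.2 h) s le_rfl

lemma fieldBasis_repr_natDegree_ne_zero {P : K[X]} (hP : P ≠ 0) :
    S.fieldBasis.repr P P.natDegree ≠ 0 := by
  intro h
  have hlt : P ∈ degreeLT K P.natDegree := by
    refine S.mem_degreeLT_iff_fieldBasis_repr_eq_zero.2 fun s hs => ?_
    rcases hs.eq_or_lt with rfl | hs
    · exact h
    · exact S.fieldBasis_repr_eq_zero_of_degree_lt
        (degree_le_natDegree.trans_lt (by exact_mod_cast hs))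
  exact (mem_degreeLT.1 hlt).ne (degree_eq_natDegree hP)

variable {L : K[X] →ₗ[K] K[X]} {lam nu : ℕ → K}

lemma apply_eq_smul_iff_of_isBidiagonal (hL : IsBidiagonal S L lam nu) (P : K[X]) (μ : K) :
    L P = μ • P ↔
      ∀ s, S.fieldBasis.repr P (s + 1) * nu (s + 1) = S.fieldBasis.repr P s * (μ - lam s) :=
  S.fieldBasis.apply_eq_smul_iff_of_isBidiagonal (by simpa [IsBidiagonal] using hL) P μ

lemma eq_lam_natDegree_of_apply_eq_smul (hL : IsBidiagonal S L lam nu) {P : K[X]}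
    (hP : P ≠ 0) {μ : K} (h : L P = μ • P) : μ = lam P.natDegree := by
  have hrec := (S.apply_eq_smul_iff_of_isBidiagonal hL P μ).1 h P.natDegree
  rw [S.fieldBasis_repr_eq_zero_of_degree_lt
    (degree_le_natDegree.trans_lt (by exact_mod_cast P.natDegree.lt_succ_self)),
    zero_mul, eq_comm, mul_eq_zero] at hrec
  exact sub_eq_zero.1 (hrec.resolve_left (S.fieldBasis_repr_natDegree_ne_zero hP))

lemma eq_of_apply_eq_lam_smul (hL : IsBidiagonal S L lam nu) {n : ℕ}
    (hlam : ∀ j < n, lam j ≠ lam n) {P Q : K[X]} (hP : P.degree = n) (hQ : Q.degree = n)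
    (hPQ : P.leadingCoeff = Q.leadingCoeff) (hLP : L P = lam n • P) (hLQ : L Q = lam n • Q) :
    P = Q := by
  by_contra hne
  have hD : P - Q ≠ 0 := sub_ne_zero.2 hne
  have hP0 : P ≠ 0 := fun h => by simp [h] at hP
  have hdeg : (P - Q).degree < n := hP ▸ degree_sub_lt_left (hP.trans hQ.symm) hP0 hPQ
  have hLD : L (P - Q) = lam n • (P - Q) := by rw [map_sub, hLP, hLQ, smul_sub]
  exact hlam _ ((natDegree_lt_iff_degree_lt hD).2 hdeg)
    (S.eq_lam_natDegree_of_apply_eq_smul hL hD hLD).symm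

lemma exists_apply_eq_lam_smul (hL : IsBidiagonal S L lam nu) {n : ℕ}
    (hlam : ∀ j < n, lam j ≠ lam n) :
    ∃ P : K[X], P.degree = n ∧ P.leadingCoeff = (S n).leadingCoeff ∧ L P = lam n • P := by
  set A : ℕ → K := fun s => ∏ j ∈ Ico s n, nu (j + 1) / (lam n - lam j)
  have hAn : A n = 1 := by simp [A]
  have hrec : ∀ s < n, A (s + 1) * nu (s + 1) = A s * (lam n - lam s) := fun s hs => by
    have := sub_ne_zero.2 (hlam s hs).symm
    simp only [A]
    rw [prod_eq_prod_Ico_succ_bot hs]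
    field_simp
  have hsplit : ∑ s ∈ range (n + 1), A s • S s = S n + ∑ s ∈ range n, A s • S s := by
    rw [sum_range_succ, hAn, one_smul, add_comm]
  have hlow : (∑ s ∈ range n, A s • S s).degree < (S n).degree := by
    simpa using S.degree_sum_range_smul_lt A n
  refine ⟨∑ s ∈ range (n + 1), A s • S s, ?_, ?_, ?_⟩
  · rw [hsplit, degree_add_eq_left_of_degree_lt hlow, S.degree_eq]
  · rw [hsplit, leadingCoeff_add_of_degree_lt' hlow]
  · refine (S.apply_eq_smul_iff_of_isBidiagonal hL _ _).2 fun s => ?_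
    simp only [fieldBasis_repr_sum_range_smul]
    rcases lt_trichotomy s n with hs | rfl | hs
    · rw [if_pos (by omega), if_pos (by omega)]
      exact hrec s hs
    · simp
    · rw [if_neg (by omega), if_neg (by omega), zero_mul, zero_mul]

lemma mul_eq_mul_of_apply_sum_range_eq_smul (hL : IsBidiagonal S L lam nu) (A : ℕ → K)
    {n : ℕ} {μ : K}
    (h : L (∑ s ∈ range (n + 1), A s • S s) = μ • ∑ s ∈ range (n + 1), A s • S s) :
    ∀ s < n, A (s + 1) * nu (s + 1) = A s * (μ - lam s) := by
  intro s hs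
  have := (S.apply_eq_smul_iff_of_isBidiagonal hL _ μ).1 h s
  rwa [fieldBasis_repr_sum_range_smul, fieldBasis_repr_sum_range_smul, if_pos (by omega),
    if_pos (by omega)] at this

end Polynomial.Sequence

lemma eq_mul_prod_div_prod_of_mul_eq_mul {K : Type*} [Field K] {A d w : ℕ → K} {n : ℕ}
    (hd : ∀ j < n, d j ≠ 0) (hrec : ∀ s < n, A (s + 1) * d s = A s * w s) :
    ∀ s ≤ n, A s = A 0 * (∏ j ∈ range s, w j) / ∏ j ∈ range s, d j := by
  intro s hs
  induction s with
  | zero => simp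
  | succ s ih =>
    have hprod : ∏ j ∈ range s, d j ≠ 0 :=
      prod_ne_zero_iff.2 fun j hj => hd j (by rw [mem_range] at hj; omega)
    have hds := hd s hs
    have h := hrec s hs
    rw [ih (by omega)] at h
    rw [prod_range_succ, prod_range_succ]
    field_simp at h ⊢
    linear_combination h

/-- If L is lower two-diagonal in a graded polynomial basis (φₙ), with pairwise
distinct diagonal entries λₙ and nonzero off-diagonal entries νⱼ, then for each n
there is a unique eigenpolynomial Pₙ of degree n with the leading coefficient of
φₙ, and its expansion coefficients over the basis satisfy the stated recurrence
and product formula. -/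
theorem stmt3 (L : Polynomial ℝ →ₗ[ℝ] Polynomial ℝ) (lam nu : ℕ → ℝ)
    (φ : ℕ → Polynomial ℝ)
    (hdeg : ∀ n, (φ n).degree = n)
    (hlam : ∀ m n : ℕ, m ≠ n → lam m ≠ lam n)
    (hnu : ∀ j : ℕ, 1 ≤ j → nu j ≠ 0)
    (hL0 : L (φ 0) = lam 0 • φ 0)
    (hLn : ∀ n : ℕ, 1 ≤ n → L (φ n) = lam n • φ n + nu n • φ (n - 1)) :
    ∀ n : ℕ,
      (∃! P : Polynomial ℝ,
        P.degree = n ∧ P.leadingCoeff = (φ n).leadingCoeff ∧ L P = lam n • P) ∧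
      (∀ P : Polynomial ℝ, P.degree = n → L P = lam n • P →
        ∀ A : ℕ → ℝ, P = ∑ s ∈ range (n + 1), A s • φ s →
          (∀ s < n, A (s + 1) * nu (s + 1) = A s * (lam n - lam s)) ∧
          (∀ s ≤ n, A s = A 0 * (∏ j ∈ range s, (lam n - lam j)) /
            ∏ j ∈ range s, nu (j + 1))) := by
  let S : Sequence ℝ := ⟨φ, hdeg⟩
  have hL : IsBidiagonal S L lam nu := ⟨hL0, fun n => hLn (n + 1) n.succ_pos⟩
  intro n
  have hlam' : ∀ j < n, lam j ≠ lam n := fun j hj => hlam j n hj.ne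
  obtain ⟨P, hP⟩ := S.exists_apply_eq_lam_smul hL hlam'
  refine ⟨⟨P, hP, fun Q hQ =>
    S.eq_of_apply_eq_lam_smul hL hlam' hQ.1 hP.1 (hQ.2.1.trans hP.2.1.symm) hQ.2.2 hP.2.2⟩,
    fun P _ hLP A hA => ?_⟩
  have hrec := S.mul_eq_mul_of_apply_sum_range_eq_smul hL A (hA ▸ hLP)
  exact ⟨hrec, eq_mul_prod_div_prod_of_mul_eq_mul (fun j _ => hnu (j + 1) j.succ_pos) hrec⟩
end

section
/- Let X = 2L + κ with κ = ρ₁+ρ₂-r₁-r₂+1/2, Y the operator of multiplication by 2x+1/2, and Z = r₁r₂/(x+1/2) + ρ₁ρ₂/x - ((x-ρ₁)(x-ρ₂)/x)·R - ((x-r₁+1/2)(x-r₂+1/2)/(x+1/2))·T⁺R, acting on polynomials, where (Rf)(x)=f(-x) and (T⁺Rf)(x)=f(-x-1). Then {X,Y} = Z + ω₃ where ω₃ = 4(ρ₁ρ₂ - r₁r₂). -/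
/-- X = 2L + κ with κ = ρ₁+ρ₂-r₁-r₂+1/2. -/
noncomputable def biX (r₁ r₂ ρ₁ ρ₂ : ℝ) (f : ℝ → ℝ) (x : ℝ) : ℝ :=
  2 * biL r₁ r₂ ρ₁ ρ₂ f x + (ρ₁ + ρ₂ - r₁ - r₂ + 1/2) * f x

/-- Y = multiplication by 2x + 1/2. -/
noncomputable def biY (f : ℝ → ℝ) (x : ℝ) : ℝ := (2 * x + 1/2) * f x

/-- Z = r₁r₂/(x+1/2) + ρ₁ρ₂/x - ((x-ρ₁)(x-ρ₂)/x)R - ((x-r₁+1/2)(x-r₂+1/2)/(x+1/2))T⁺R. -/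
noncomputable def biZ (r₁ r₂ ρ₁ ρ₂ : ℝ) (f : ℝ → ℝ) (x : ℝ) : ℝ :=
  (r₁ * r₂ / (x + 1/2) + ρ₁ * ρ₂ / x) * f x
    - ((x - ρ₁) * (x - ρ₂) / x) * f (-x)
    - ((x - r₁ + 1/2) * (x - r₂ + 1/2) / (x + 1/2)) * f (-x - 1)

/-- The anticommutation relation {X,Y} = Z + ω₃ with ω₃ = 4(ρ₁ρ₂ - r₁r₂). -/
theorem stmt4 (r₁ r₂ ρ₁ ρ₂ : ℝ) (f : ℝ → ℝ) (x : ℝ)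
    (hx0 : x ≠ 0) (hx1 : 2 * x + 1 ≠ 0) :
    biX r₁ r₂ ρ₁ ρ₂ (biY f) x + biY (biX r₁ r₂ ρ₁ ρ₂ f) x =
      biZ r₁ r₂ ρ₁ ρ₂ f x + 4 * (ρ₁ * ρ₂ - r₁ * r₂) * f x := by
  have hx2 : x + 1/2 ≠ 0 := fun h => hx1 (by linarith)
  simp only [biX, biL, biF, biG, biY, biZ]
  rw [show x + 1/2 = (2*x+1)/2 by ring]
  field_simp
  ring
end

section
/- In the Bannai-Ito realization, the Casimir operator Q = X² + Y² + Z² acts on polynomials as the scalar 2(ρ₁² + ρ₂² + r₁² + r₂²) - 1/4. -/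
set_option maxHeartbeats 1000000000 in
/-- The Casimir operator Q = X² + Y² + Z² acts on polynomials as the scalar
2(ρ₁² + ρ₂² + r₁² + r₂²) - 1/4. -/
theorem stmt6 (r₁ r₂ ρ₁ ρ₂ : ℝ) (p : Polynomial ℝ) (x : ℝ)
    (hx0 : x ≠ 0) (hx1 : 2 * x + 1 ≠ 0) (hx2 : 2 * x - 1 ≠ 0) (hx3 : x + 1 ≠ 0) :
    biX r₁ r₂ ρ₁ ρ₂ (biX r₁ r₂ ρ₁ ρ₂ (fun t => p.eval t)) x
      + biY (biY (fun t => p.eval t)) x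
      + biZ r₁ r₂ ρ₁ ρ₂ (biZ r₁ r₂ ρ₁ ρ₂ (fun t => p.eval t)) x =
      (2 * (ρ₁ ^ 2 + ρ₂ ^ 2 + r₁ ^ 2 + r₂ ^ 2) - 1/4) * p.eval x := by
  simp only [biX, biL, biF, biG, biY, biZ]
  have e1 : -(-x) = x := by ring
  have e3 : -(-x - 1) = x + 1 := by ring
  rw [e1, e3]
  have e5 : x + 1 - 1 = x := by ring
  rw [e5]
  generalize p.eval x = a
  generalize p.eval (-x) = b
  generalize p.eval (-x - 1) = c
  generalize p.eval (x - 1) = d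
  generalize p.eval (x + 1) = e
  simp only [div_eq_mul_inv, one_mul]
  have hu : x * x⁻¹ = 1 := mul_inv_cancel₀ hx0
  have hv : (2 * x + 1) * (2 * x + 1)⁻¹ = 1 := mul_inv_cancel₀ hx1
  have hw : (2 * x - 1) * (2 * x - 1)⁻¹ = 1 := mul_inv_cancel₀ hx2
  have hs : (x + 1) * (x + 1)⁻¹ = 1 := mul_inv_cancel₀ hx3
  have i1 : (2 * x)⁻¹ = 2⁻¹ * x⁻¹ := by rw [mul_inv]
  have i2 : (2 * -x)⁻¹ = -(2⁻¹ * x⁻¹) := by rw [show (2 : ℝ) * -x = -(2 * x) by ring, inv_neg, mul_inv]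
  have i3 : (2 * -x + 1)⁻¹ = -(2 * x - 1)⁻¹ := by rw [show (2 : ℝ) * -x + 1 = -(2 * x - 1) by ring, inv_neg]
  have i4 : (2 * (-x - 1))⁻¹ = -(2⁻¹ * (x + 1)⁻¹) := by
    rw [show (2 : ℝ) * (-x - 1) = -(2 * (x + 1)) by ring, inv_neg, mul_inv]
  have i5 : (2 * (-x - 1) + 1)⁻¹ = -(2 * x + 1)⁻¹ := by
    rw [show (2 : ℝ) * (-x - 1) + 1 = -(2 * x + 1) by ring, inv_neg]
  have i6 : (x + 2⁻¹)⁻¹ = 2 * (2 * x + 1)⁻¹ := by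
    rw [show x + (2:ℝ)⁻¹ = (2 * x + 1) / 2 by ring, div_eq_mul_inv, mul_inv, inv_inv]; ring
  have i7 : (-x)⁻¹ = -x⁻¹ := by rw [inv_neg]
  have i8 : (-x + 2⁻¹)⁻¹ = -(2 * (2 * x - 1)⁻¹) := by
    rw [show -x + (2:ℝ)⁻¹ = -((2 * x - 1) / 2) by ring, inv_neg, div_eq_mul_inv, mul_inv, inv_inv]; ring
  have i9 : (-x - 1)⁻¹ = -(x + 1)⁻¹ := by rw [show -x - 1 = -(x + 1) by ring, inv_neg]
  have i10 : (-x - 1 + 2⁻¹)⁻¹ = -(2 * (2 * x + 1)⁻¹) := by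
    rw [show -x - 1 + (2:ℝ)⁻¹ = -((2 * x + 1) / 2) by ring, inv_neg, div_eq_mul_inv, mul_inv, inv_inv]; ring
  rw [i2, i3, i4, i5, i6, i8, i9, i10, i1, i7]
  generalize x⁻¹ = U at hu
  generalize (2 * x + 1)⁻¹ = V at hv
  generalize (2 * x - 1)⁻¹ = W at hw
  generalize (x + 1)⁻¹ = S at hs
  linear_combination (norm := ring1) ((-3/4 : ℝ)*a - ρ₂*a + ρ₂^2*a - ρ₁*a + (-2)*ρ₁*ρ₂*a + ρ₁^2*a + r₂*a + (2)*r₂*ρ₂*a + (2)*r₂*ρ₁*a + r₂^2*a + r₁*a + (2)*r₁*ρ₂*a + (2)*r₁*ρ₁*a + (-2)*r₁*r₂*a + r₁^2*a + (-1/2 : ℝ)*V*c + (1/2 : ℝ)*V*a - V*ρ₂*c + V*ρ₂*a - V*ρ₁*c + V*ρ₁*a + (2)*V*r₂*c + (-2)*V*r₂*a + (2)*V*r₂*ρ₂*c + (-2)*V*r₂*ρ₂*a + (2)*V*r₂*ρ₁*c + (-2)*V*r₂*ρ₁*a + (-2)*V*r₂^2*c + (2)*V*r₂^2*a + (2)*V*r₁*c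 + (-2)*V*r₁*a + (2)*V*r₁*ρ₂*c + (-2)*V*r₁*ρ₂*a + (2)*V*r₁*ρ₁*c + (-2)*V*r₁*ρ₁*a + (-6)*V*r₁*r₂*c + (6)*V*r₁*r₂*a + (-4)*V*r₁*r₂*ρ₂*c + (4)*V*r₁*r₂*ρ₂*a + (-4)*V*r₁*r₂*ρ₁*c + (4)*V*r₁*r₂*ρ₁*a + (4)*V*r₁*r₂^2*c + (-4)*V*r₁*r₂^2*a + (-2)*V*r₁^2*c + (2)*V*r₁^2*a + (4)*V*r₁^2*r₂*c + (-4)*V*r₁^2*r₂*a + (1/2 : ℝ)*V*S*c + (1/2 : ℝ)*V*S*ρ₂*c + (1/2 : ℝ)*V*S*ρ₁*c - V*S*r₂*c - V*S*r₂*ρ₂*c - V*S*r₂*ρ₁*c - V*S*r₁*c - V*S*r₁*ρ₂*c - V*S*r₁*ρ₁*c + (2)*V*S*r₁*r₂*c + (2)*V*S*r₁*r₂*ρ₂*c + (2)*V*S*r₁*r₂*ρ₁*c + (1/4 : ℝ)*V^2*a - V^2*r₂*c + V^2*r₂*a + (2)*V^2*r₂^2*c + (-3)*V^2*r₂^2*a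 - V^2*r₁*c + V^2*r₁*a + (4)*V^2*r₁*r₂*c + (-4)*V^2*r₁*r₂*a + (-4)*V^2*r₁*r₂^2*c + (4)*V^2*r₁*r₂^2*a + (2)*V^2*r₁^2*c + (-3)*V^2*r₁^2*a + (-4)*V^2*r₁^2*r₂*c + (4)*V^2*r₁^2*r₂*a + U*ρ₁*ρ₂*b - U*ρ₁*ρ₂*a + (2)*U*ρ₁*ρ₂^2*b + (-2)*U*ρ₁*ρ₂^2*a + (2)*U*ρ₁^2*ρ₂*b + (-2)*U*ρ₁^2*ρ₂*a + (-2)*U*r₂*ρ₁*ρ₂*b + (2)*U*r₂*ρ₁*ρ₂*a + (-2)*U*r₁*ρ₁*ρ₂*b + (2)*U*r₁*ρ₁*ρ₂*a + (1/2 : ℝ)*U*W*ρ₁*ρ₂*b - U*W*r₂*ρ₁*ρ₂*b - U*W*r₁*ρ₁*ρ₂*b + (-1/2 : ℝ)*U*V*ρ₁*ρ₂*b + U*V*ρ₁*ρ₂*a + U*V*r₂*ρ₁*ρ₂*b + (-2)*U*V*r₂*ρ₁*ρ₂*a + U*V*r₁*ρ₁*ρ₂*b + (-2)*U*V*r₁*ρ₁*ρ₂*a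 + (-2)*x*a + (-2)*x*V*c + (2)*x*V*a + (-4)*x*V*ρ₂*c + (4)*x*V*ρ₂*a + (-4)*x*V*ρ₁*c + (4)*x*V*ρ₁*a + (6)*x*V*r₂*c + (-6)*x*V*r₂*a + (4)*x*V*r₂*ρ₂*c + (-4)*x*V*r₂*ρ₂*a + (4)*x*V*r₂*ρ₁*c + (-4)*x*V*r₂*ρ₁*a + (-4)*x*V*r₂^2*c + (4)*x*V*r₂^2*a + (6)*x*V*r₁*c + (-6)*x*V*r₁*a + (4)*x*V*r₁*ρ₂*c + (-4)*x*V*r₁*ρ₂*a + (4)*x*V*r₁*ρ₁*c + (-4)*x*V*r₁*ρ₁*a + (-8)*x*V*r₁*r₂*c + (8)*x*V*r₁*r₂*a + (-4)*x*V*r₁^2*c + (4)*x*V*r₁^2*a + (3)*x*V*S*c + (5/2 : ℝ)*x*V*S*ρ₂*c + (5/2 : ℝ)*x*V*S*ρ₁*c + (-4)*x*V*S*r₂*c + (-3)*x*V*S*r₂*ρ₂*c + (-3)*x*V*S*r₂*ρ₁*c + (-4)*x*V*S*r₁*c + (-3)*x*V*S*r₁*ρ₂*c + (-3)*x*V*S*r₁*ρ₁*c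 + (4)*x*V*S*r₁*r₂*c + (2)*x*V*S*r₁*r₂*ρ₂*c + (2)*x*V*S*r₁*r₂*ρ₁*c + (2)*x*V^2*a + (-6)*x*V^2*r₂*c + (6)*x*V^2*r₂*a + (8)*x*V^2*r₂^2*c + (-12)*x*V^2*r₂^2*a + (-6)*x*V^2*r₁*c + (6)*x*V^2*r₁*a + (16)*x*V^2*r₁*r₂*c + (-16)*x*V^2*r₁*r₂*a + (-8)*x*V^2*r₁*r₂^2*c + (8)*x*V^2*r₁*r₂^2*a + (8)*x*V^2*r₁^2*c + (-12)*x*V^2*r₁^2*a + (-8)*x*V^2*r₁^2*r₂*c + (8)*x*V^2*r₁^2*r₂*a + (-3/4 : ℝ)*x*U*a - x*U*ρ₂*b + (-2)*x*U*ρ₂^2*b + (3)*x*U*ρ₂^2*a - x*U*ρ₁*b + (-4)*x*U*ρ₁*ρ₂*b + (2)*x*U*ρ₁*ρ₂*a + (-2)*x*U*ρ₁^2*b + (3)*x*U*ρ₁^2*a + x*U*r₂*a + (2)*x*U*r₂*ρ₂*b + (2)*x*U*r₂*ρ₁*b + x*U*r₂^2*a + x*U*r₁*a + (2)*x*U*r₁*ρ₂*b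 + (2)*x*U*r₁*ρ₁*b + (-2)*x*U*r₁*r₂*a + x*U*r₁^2*a + (-1/2 : ℝ)*x*U*W*ρ₂*b + (-1/2 : ℝ)*x*U*W*ρ₁*b + (-2)*x*U*W*ρ₁*ρ₂*b + x*U*W*r₂*ρ₂*b + x*U*W*r₂*ρ₁*b + (2)*x*U*W*r₂*ρ₁*ρ₂*b + x*U*W*r₁*ρ₂*b + x*U*W*r₁*ρ₁*b + (2)*x*U*W*r₁*ρ₁*ρ₂*b + (-1/2 : ℝ)*x*U*V*c + (1/2 : ℝ)*x*U*V*a + (-1/2 : ℝ)*x*U*V*ρ₂*c + (1/2 : ℝ)*x*U*V*ρ₂*b + (-1/2 : ℝ)*x*U*V*ρ₁*c + (1/2 : ℝ)*x*U*V*ρ₁*b + (-2)*x*U*V*ρ₁*ρ₂*b + (4)*x*U*V*ρ₁*ρ₂*a + (2)*x*U*V*r₂*c + (-2)*x*U*V*r₂*a + x*U*V*r₂*ρ₂*c - x*U*V*r₂*ρ₂*b + x*U*V*r₂*ρ₁*c - x*U*V*r₂*ρ₁*b + (2)*x*U*V*r₂*ρ₁*ρ₂*b + (-4)*x*U*V*r₂*ρ₁*ρ₂*a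 + (-2)*x*U*V*r₂^2*c + (2)*x*U*V*r₂^2*a + (2)*x*U*V*r₁*c + (-2)*x*U*V*r₁*a + x*U*V*r₁*ρ₂*c - x*U*V*r₁*ρ₂*b + x*U*V*r₁*ρ₁*c - x*U*V*r₁*ρ₁*b + (2)*x*U*V*r₁*ρ₁*ρ₂*b + (-4)*x*U*V*r₁*ρ₁*ρ₂*a + (-6)*x*U*V*r₁*r₂*c + (6)*x*U*V*r₁*r₂*a + (-2)*x*U*V*r₁*r₂*ρ₂*c + (-2)*x*U*V*r₁*r₂*ρ₁*c + (4)*x*U*V*r₁*r₂^2*c + (-4)*x*U*V*r₁*r₂^2*a + (-2)*x*U*V*r₁^2*c + (2)*x*U*V*r₁^2*a + (4)*x*U*V*r₁^2*r₂*c + (-4)*x*U*V*r₁^2*r₂*a + (1/2 : ℝ)*x*U*V*S*c + (1/2 : ℝ)*x*U*V*S*ρ₂*c + (1/2 : ℝ)*x*U*V*S*ρ₁*c - x*U*V*S*r₂*c - x*U*V*S*r₂*ρ₂*c - x*U*V*S*r₂*ρ₁*c - x*U*V*S*r₁*c - x*U*V*S*r₁*ρ₂*c - x*U*V*S*r₁*ρ₁*c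 + (2)*x*U*V*S*r₁*r₂*c + (2)*x*U*V*S*r₁*r₂*ρ₂*c + (2)*x*U*V*S*r₁*r₂*ρ₁*c + (1/4 : ℝ)*x*U*V^2*a - x*U*V^2*r₂*c + x*U*V^2*r₂*a + (2)*x*U*V^2*r₂^2*c + (-3)*x*U*V^2*r₂^2*a - x*U*V^2*r₁*c + x*U*V^2*r₁*a + (4)*x*U*V^2*r₁*r₂*c + (-4)*x*U*V^2*r₁*r₂*a + (-4)*x*U*V^2*r₁*r₂^2*c + (4)*x*U*V^2*r₁*r₂^2*a + (2)*x*U*V^2*r₁^2*c + (-3)*x*U*V^2*r₁^2*a + (-4)*x*U*V^2*r₁^2*r₂*c + (4)*x*U*V^2*r₁^2*r₂*a + (-4)*x^2*a + (-2)*x^2*V*c + (2)*x^2*V*a + (-4)*x^2*V*ρ₂*c + (4)*x^2*V*ρ₂*a + (-4)*x^2*V*ρ₁*c + (4)*x^2*V*ρ₁*a + (4)*x^2*V*r₂*c + (-4)*x^2*V*r₂*a + (4)*x^2*V*r₁*c + (-4)*x^2*V*r₁*a + (13/2 : ℝ)*x^2*V*S*c + (4)*x^2*V*S*ρ₂*c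 + (4)*x^2*V*S*ρ₁*c + (-5)*x^2*V*S*r₂*c + (-2)*x^2*V*S*r₂*ρ₂*c + (-2)*x^2*V*S*r₂*ρ₁*c + (-5)*x^2*V*S*r₁*c + (-2)*x^2*V*S*r₁*ρ₂*c + (-2)*x^2*V*S*r₁*ρ₁*c + (2)*x^2*V*S*r₁*r₂*c + (6)*x^2*V^2*a + (-12)*x^2*V^2*r₂*c + (12)*x^2*V^2*r₂*a + (8)*x^2*V^2*r₂^2*c + (-12)*x^2*V^2*r₂^2*a + (-12)*x^2*V^2*r₁*c + (12)*x^2*V^2*r₁*a + (16)*x^2*V^2*r₁*r₂*c + (-16)*x^2*V^2*r₁*r₂*a + (8)*x^2*V^2*r₁^2*c + (-12)*x^2*V^2*r₁^2*a + x^2*U*b + (-3)*x^2*U*a + (2)*x^2*U*ρ₂*b + (-2)*x^2*U*ρ₂*a + (2)*x^2*U*ρ₁*b + (-2)*x^2*U*ρ₁*a + (-2)*x^2*U*r₂*b + (2)*x^2*U*r₂*a + (-2)*x^2*U*r₁*b + (2)*x^2*U*r₁*a + (1/2 : ℝ)*x^2*U*W*b + (2)*x^2*U*W*ρ₂*b +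 (2)*x^2*U*W*ρ₁*b + (2)*x^2*U*W*ρ₁*ρ₂*b - x^2*U*W*r₂*b + (-2)*x^2*U*W*r₂*ρ₂*b + (-2)*x^2*U*W*r₂*ρ₁*b - x^2*U*W*r₁*b + (-2)*x^2*U*W*r₁*ρ₂*b + (-2)*x^2*U*W*r₁*ρ₁*b + (-5/2 : ℝ)*x^2*U*V*c + (-1/2 : ℝ)*x^2*U*V*b + (3)*x^2*U*V*a + (-2)*x^2*U*V*ρ₂*c + (2)*x^2*U*V*ρ₂*b + (-2)*x^2*U*V*ρ₁*c + (2)*x^2*U*V*ρ₁*b + (-2)*x^2*U*V*ρ₁*ρ₂*b + (4)*x^2*U*V*ρ₁*ρ₂*a + (7)*x^2*U*V*r₂*c + x^2*U*V*r₂*b + (-8)*x^2*U*V*r₂*a + (2)*x^2*U*V*r₂*ρ₂*c + (-2)*x^2*U*V*r₂*ρ₂*b + (2)*x^2*U*V*r₂*ρ₁*c + (-2)*x^2*U*V*r₂*ρ₁*b + (-4)*x^2*U*V*r₂^2*c + (4)*x^2*U*V*r₂^2*a + (7)*x^2*U*V*r₁*c + x^2*U*V*r₁*b + (-8)*x^2*U*V*r₁*a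 + (2)*x^2*U*V*r₁*ρ₂*c + (-2)*x^2*U*V*r₁*ρ₂*b + (2)*x^2*U*V*r₁*ρ₁*c + (-2)*x^2*U*V*r₁*ρ₁*b + (-10)*x^2*U*V*r₁*r₂*c + (12)*x^2*U*V*r₁*r₂*a + (-4)*x^2*U*V*r₁^2*c + (4)*x^2*U*V*r₁^2*a + (3)*x^2*U*V*S*c + (5/2 : ℝ)*x^2*U*V*S*ρ₂*c + (5/2 : ℝ)*x^2*U*V*S*ρ₁*c + (-4)*x^2*U*V*S*r₂*c + (-3)*x^2*U*V*S*r₂*ρ₂*c + (-3)*x^2*U*V*S*r₂*ρ₁*c + (-4)*x^2*U*V*S*r₁*c + (-3)*x^2*U*V*S*r₁*ρ₂*c + (-3)*x^2*U*V*S*r₁*ρ₁*c + (4)*x^2*U*V*S*r₁*r₂*c + (2)*x^2*U*V*S*r₁*r₂*ρ₂*c + (2)*x^2*U*V*S*r₁*r₂*ρ₁*c + (2)*x^2*U*V^2*a + (-6)*x^2*U*V^2*r₂*c + (6)*x^2*U*V^2*r₂*a + (8)*x^2*U*V^2*r₂^2*c + (-12)*x^2*U*V^2*r₂^2*a + (-6)*x^2*U*V^2*r₁*c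 + (6)*x^2*U*V^2*r₁*a + (16)*x^2*U*V^2*r₁*r₂*c + (-16)*x^2*U*V^2*r₁*r₂*a + (-8)*x^2*U*V^2*r₁*r₂^2*c + (8)*x^2*U*V^2*r₁*r₂^2*a + (8)*x^2*U*V^2*r₁^2*c + (-12)*x^2*U*V^2*r₁^2*a + (-8)*x^2*U*V^2*r₁^2*r₂*c + (8)*x^2*U*V^2*r₁^2*r₂*a + (6)*x^3*V*S*c + (2)*x^3*V*S*ρ₂*c + (2)*x^3*V*S*ρ₁*c + (-2)*x^3*V*S*r₂*c + (-2)*x^3*V*S*r₁*c + (8)*x^3*V^2*a + (-8)*x^3*V^2*r₂*c + (8)*x^3*V^2*r₂*a + (-8)*x^3*V^2*r₁*c + (8)*x^3*V^2*r₁*a + (-4)*x^3*U*a + (-2)*x^3*U*W*b + (-2)*x^3*U*W*ρ₂*b + (-2)*x^3*U*W*ρ₁*b + (2)*x^3*U*W*r₂*b + (2)*x^3*U*W*r₁*b + (-4)*x^3*U*V*c + (-2)*x^3*U*V*b + (6)*x^3*U*V*a + (-2)*x^3*U*V*ρ₂*c + (2)*x^3*U*V*ρ₂*b + (-2)*x^3*U*V*ρ₁*c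 + (2)*x^3*U*V*ρ₁*b + (6)*x^3*U*V*r₂*c + (2)*x^3*U*V*r₂*b + (-8)*x^3*U*V*r₂*a + (6)*x^3*U*V*r₁*c + (2)*x^3*U*V*r₁*b + (-8)*x^3*U*V*r₁*a + (13/2 : ℝ)*x^3*U*V*S*c + (4)*x^3*U*V*S*ρ₂*c + (4)*x^3*U*V*S*ρ₁*c + (-5)*x^3*U*V*S*r₂*c + (-2)*x^3*U*V*S*r₂*ρ₂*c + (-2)*x^3*U*V*S*r₂*ρ₁*c + (-5)*x^3*U*V*S*r₁*c + (-2)*x^3*U*V*S*r₁*ρ₂*c + (-2)*x^3*U*V*S*r₁*ρ₁*c + (2)*x^3*U*V*S*r₁*r₂*c + (6)*x^3*U*V^2*a + (-12)*x^3*U*V^2*r₂*c + (12)*x^3*U*V^2*r₂*a + (8)*x^3*U*V^2*r₂^2*c + (-12)*x^3*U*V^2*r₂^2*a + (-12)*x^3*U*V^2*r₁*c + (12)*x^3*U*V^2*r₁*a + (16)*x^3*U*V^2*r₁*r₂*c + (-16)*x^3*U*V^2*r₁*r₂*a + (8)*x^3*U*V^2*r₁^2*c + (-12)*x^3*U*V^2*r₁^2*a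 + (2)*x^4*V*S*c + (4)*x^4*V^2*a + (2)*x^4*U*W*b + (-2)*x^4*U*V*c + (-2)*x^4*U*V*b + (4)*x^4*U*V*a + (6)*x^4*U*V*S*c + (2)*x^4*U*V*S*ρ₂*c + (2)*x^4*U*V*S*ρ₁*c + (-2)*x^4*U*V*S*r₂*c + (-2)*x^4*U*V*S*r₁*c + (8)*x^4*U*V^2*a + (-8)*x^4*U*V^2*r₂*c + (8)*x^4*U*V^2*r₂*a + (-8)*x^4*U*V^2*r₁*c + (8)*x^4*U*V^2*r₁*a + (2)*x^5*U*V*S*c + (4)*x^5*U*V^2*a) * hu + (x*U^2*ρ₁*ρ₂*b - x*U^2*ρ₁*ρ₂*a + (-2)*x*U^2*r₂*ρ₁*ρ₂*b + (2)*x*U^2*r₂*ρ₁*ρ₂*a + (-2)*x*U^2*r₁*ρ₁*ρ₂*b + (2)*x*U^2*r₁*ρ₁*ρ₂*a + (1/2 : ℝ)*x*U^2*W*ρ₁*ρ₂*b - x*U^2*W*r₂*ρ₁*ρ₂*b - x*U^2*W*r₁*ρ₁*ρ₂*b + (1/2 : ℝ)*x*U^2*V*ρ₁*ρ₂*b - x*U^2*V*r₂*ρ₁*ρ₂*b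 - x*U^2*V*r₁*ρ₁*ρ₂*b + (1/2 : ℝ)*x*U^2*V*W*ρ₁*ρ₂*b - x*U^2*V*W*r₂*ρ₁*ρ₂*b - x*U^2*V*W*r₁*ρ₁*ρ₂*b + (-3/4 : ℝ)*x^2*U^2*a - x^2*U^2*ρ₂*b - x^2*U^2*ρ₁*b + (-2)*x^2*U^2*ρ₁*ρ₂*a + x^2*U^2*r₂*a + (2)*x^2*U^2*r₂*ρ₂*b + (2)*x^2*U^2*r₂*ρ₁*b + x^2*U^2*r₂^2*a + x^2*U^2*r₁*a + (2)*x^2*U^2*r₁*ρ₂*b + (2)*x^2*U^2*r₁*ρ₁*b + (-2)*x^2*U^2*r₁*r₂*a + x^2*U^2*r₁^2*a + (-1/2 : ℝ)*x^2*U^2*W*ρ₂*b + (-1/2 : ℝ)*x^2*U^2*W*ρ₁*b + (-2)*x^2*U^2*W*ρ₁*ρ₂*b + x^2*U^2*W*r₂*ρ₂*b + x^2*U^2*W*r₂*ρ₁*b + (2)*x^2*U^2*W*r₂*ρ₁*ρ₂*b + x^2*U^2*W*r₁*ρ₂*b + x^2*U^2*W*r₁*ρ₁*b + (2)*x^2*U^2*W*r₁*ρ₁*ρ₂*b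 + (-1/2 : ℝ)*x^2*U^2*V*c + (-1/4 : ℝ)*x^2*U^2*V*a + (-1/2 : ℝ)*x^2*U^2*V*ρ₂*c + (-1/2 : ℝ)*x^2*U^2*V*ρ₂*b + (-1/2 : ℝ)*x^2*U^2*V*ρ₁*c + (-1/2 : ℝ)*x^2*U^2*V*ρ₁*b + (2)*x^2*U^2*V*r₂*c - x^2*U^2*V*r₂*a + x^2*U^2*V*r₂*ρ₂*c + x^2*U^2*V*r₂*ρ₂*b + x^2*U^2*V*r₂*ρ₁*c + x^2*U^2*V*r₂*ρ₁*b + (-2)*x^2*U^2*V*r₂*ρ₁*ρ₂*b + (-2)*x^2*U^2*V*r₂^2*c + (3)*x^2*U^2*V*r₂^2*a + (2)*x^2*U^2*V*r₁*c - x^2*U^2*V*r₁*a + x^2*U^2*V*r₁*ρ₂*c + x^2*U^2*V*r₁*ρ₂*b + x^2*U^2*V*r₁*ρ₁*c + x^2*U^2*V*r₁*ρ₁*b + (-2)*x^2*U^2*V*r₁*ρ₁*ρ₂*b + (-6)*x^2*U^2*V*r₁*r₂*c + (4)*x^2*U^2*V*r₁*r₂*a + (-2)*x^2*U^2*V*r₁*r₂*ρ₂*c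 + (-2)*x^2*U^2*V*r₁*r₂*ρ₁*c + (4)*x^2*U^2*V*r₁*r₂^2*c + (-4)*x^2*U^2*V*r₁*r₂^2*a + (-2)*x^2*U^2*V*r₁^2*c + (3)*x^2*U^2*V*r₁^2*a + (4)*x^2*U^2*V*r₁^2*r₂*c + (-4)*x^2*U^2*V*r₁^2*r₂*a + (1/2 : ℝ)*x^2*U^2*V*S*c + (1/2 : ℝ)*x^2*U^2*V*S*ρ₂*c + (1/2 : ℝ)*x^2*U^2*V*S*ρ₁*c - x^2*U^2*V*S*r₂*c - x^2*U^2*V*S*r₂*ρ₂*c - x^2*U^2*V*S*r₂*ρ₁*c - x^2*U^2*V*S*r₁*c - x^2*U^2*V*S*r₁*ρ₂*c - x^2*U^2*V*S*r₁*ρ₁*c + (2)*x^2*U^2*V*S*r₁*r₂*c + (2)*x^2*U^2*V*S*r₁*r₂*ρ₂*c + (2)*x^2*U^2*V*S*r₁*r₂*ρ₁*c + (-1/2 : ℝ)*x^2*U^2*V*W*ρ₂*b + (-1/2 : ℝ)*x^2*U^2*V*W*ρ₁*b - x^2*U^2*V*W*ρ₁*ρ₂*b + x^2*U^2*V*W*r₂*ρ₂*b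 + x^2*U^2*V*W*r₂*ρ₁*b + x^2*U^2*V*W*r₁*ρ₂*b + x^2*U^2*V*W*r₁*ρ₁*b + x^3*U^2*b + (-3)*x^3*U^2*a + (-2)*x^3*U^2*r₂*b + (2)*x^3*U^2*r₂*a + (-2)*x^3*U^2*r₁*b + (2)*x^3*U^2*r₁*a + (1/2 : ℝ)*x^3*U^2*W*b + (2)*x^3*U^2*W*ρ₂*b + (2)*x^3*U^2*W*ρ₁*b + (2)*x^3*U^2*W*ρ₁*ρ₂*b - x^3*U^2*W*r₂*b + (-2)*x^3*U^2*W*r₂*ρ₂*b + (-2)*x^3*U^2*W*r₂*ρ₁*b - x^3*U^2*W*r₁*b + (-2)*x^3*U^2*W*r₁*ρ₂*b + (-2)*x^3*U^2*W*r₁*ρ₁*b + (-5/2 : ℝ)*x^3*U^2*V*c + (1/2 : ℝ)*x^3*U^2*V*b + (-3/2 : ℝ)*x^3*U^2*V*a + (-2)*x^3*U^2*V*ρ₂*c + (-2)*x^3*U^2*V*ρ₁*c + (-2)*x^3*U^2*V*ρ₁*ρ₂*b + (7)*x^3*U^2*V*r₂*c - x^3*U^2*V*r₂*b + (-4)*x^3*U^2*V*r₂*a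 + (2)*x^3*U^2*V*r₂*ρ₂*c + (2)*x^3*U^2*V*r₂*ρ₂*b + (2)*x^3*U^2*V*r₂*ρ₁*c + (2)*x^3*U^2*V*r₂*ρ₁*b + (-4)*x^3*U^2*V*r₂^2*c + (6)*x^3*U^2*V*r₂^2*a + (7)*x^3*U^2*V*r₁*c - x^3*U^2*V*r₁*b + (-4)*x^3*U^2*V*r₁*a + (2)*x^3*U^2*V*r₁*ρ₂*c + (2)*x^3*U^2*V*r₁*ρ₂*b + (2)*x^3*U^2*V*r₁*ρ₁*c + (2)*x^3*U^2*V*r₁*ρ₁*b + (-10)*x^3*U^2*V*r₁*r₂*c + (8)*x^3*U^2*V*r₁*r₂*a + (-4)*x^3*U^2*V*r₁^2*c + (6)*x^3*U^2*V*r₁^2*a + (3)*x^3*U^2*V*S*c + (5/2 : ℝ)*x^3*U^2*V*S*ρ₂*c + (5/2 : ℝ)*x^3*U^2*V*S*ρ₁*c + (-4)*x^3*U^2*V*S*r₂*c + (-3)*x^3*U^2*V*S*r₂*ρ₂*c + (-3)*x^3*U^2*V*S*r₂*ρ₁*c + (-4)*x^3*U^2*V*S*r₁*c + (-3)*x^3*U^2*V*S*r₁*ρ₂*c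 + (-3)*x^3*U^2*V*S*r₁*ρ₁*c + (4)*x^3*U^2*V*S*r₁*r₂*c + (2)*x^3*U^2*V*S*r₁*r₂*ρ₂*c + (2)*x^3*U^2*V*S*r₁*r₂*ρ₁*c + (1/2 : ℝ)*x^3*U^2*V*W*b + x^3*U^2*V*W*ρ₂*b + x^3*U^2*V*W*ρ₁*b + (-2)*x^3*U^2*V*W*ρ₁*ρ₂*b - x^3*U^2*V*W*r₂*b + (4)*x^3*U^2*V*W*r₂*ρ₁*ρ₂*b - x^3*U^2*V*W*r₁*b + (4)*x^3*U^2*V*W*r₁*ρ₁*ρ₂*b + (-3)*x^4*U^2*a + (-2)*x^4*U^2*W*b + (-2)*x^4*U^2*W*ρ₂*b + (-2)*x^4*U^2*W*ρ₁*b + (2)*x^4*U^2*W*r₂*b + (2)*x^4*U^2*W*r₁*b + (-4)*x^4*U^2*V*c + (-3)*x^4*U^2*V*a + (-2)*x^4*U^2*V*ρ₂*c + (2)*x^4*U^2*V*ρ₂*b + (-2)*x^4*U^2*V*ρ₁*c + (2)*x^4*U^2*V*ρ₁*b + (6)*x^4*U^2*V*r₂*c + (-2)*x^4*U^2*V*r₂*b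 + (-4)*x^4*U^2*V*r₂*a + (6)*x^4*U^2*V*r₁*c + (-2)*x^4*U^2*V*r₁*b + (-4)*x^4*U^2*V*r₁*a + (13/2 : ℝ)*x^4*U^2*V*S*c + (4)*x^4*U^2*V*S*ρ₂*c + (4)*x^4*U^2*V*S*ρ₁*c + (-5)*x^4*U^2*V*S*r₂*c + (-2)*x^4*U^2*V*S*r₂*ρ₂*c + (-2)*x^4*U^2*V*S*r₂*ρ₁*c + (-5)*x^4*U^2*V*S*r₁*c + (-2)*x^4*U^2*V*S*r₁*ρ₂*c + (-2)*x^4*U^2*V*S*r₁*ρ₁*c + (2)*x^4*U^2*V*S*r₁*r₂*c - x^4*U^2*V*W*b + (2)*x^4*U^2*V*W*ρ₂*b + (2)*x^4*U^2*V*W*ρ₁*b + (4)*x^4*U^2*V*W*ρ₁*ρ₂*b + (-4)*x^4*U^2*V*W*r₂*ρ₂*b + (-4)*x^4*U^2*V*W*r₂*ρ₁*b + (-4)*x^4*U^2*V*W*r₁*ρ₂*b + (-4)*x^4*U^2*V*W*r₁*ρ₁*b + (2)*x^5*U^2*W*b + (-2)*x^5*U^2*V*c + (-2)*x^5*U^2*V*b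 + (-2)*x^5*U^2*V*a + (6)*x^5*U^2*V*S*c + (2)*x^5*U^2*V*S*ρ₂*c + (2)*x^5*U^2*V*S*ρ₁*c + (-2)*x^5*U^2*V*S*r₂*c + (-2)*x^5*U^2*V*S*r₁*c + (-2)*x^5*U^2*V*W*b + (-4)*x^5*U^2*V*W*ρ₂*b + (-4)*x^5*U^2*V*W*ρ₁*b + (4)*x^5*U^2*V*W*r₂*b + (4)*x^5*U^2*V*W*r₁*b + (2)*x^6*U^2*V*S*c + (4)*x^6*U^2*V*W*b) * hv + ((1/2 : ℝ)*x*U^2*V^2*ρ₁*ρ₂*b - x*U^2*V^2*r₂*ρ₁*ρ₂*b - x*U^2*V^2*r₁*ρ₁*ρ₂*b + (-1/2 : ℝ)*x^2*U^2*V^2*c + (-1/2 : ℝ)*x^2*U^2*V^2*ρ₂*c + (-1/2 : ℝ)*x^2*U^2*V^2*ρ₂*b + (-1/2 : ℝ)*x^2*U^2*V^2*ρ₁*c + (-1/2 : ℝ)*x^2*U^2*V^2*ρ₁*b + x^2*U^2*V^2*ρ₁*ρ₂*b + x^2*U^2*V^2*r₂*c + x^2*U^2*V^2*r₂*ρ₂*c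 + x^2*U^2*V^2*r₂*ρ₂*b + x^2*U^2*V^2*r₂*ρ₁*c + x^2*U^2*V^2*r₂*ρ₁*b + (-4)*x^2*U^2*V^2*r₂*ρ₁*ρ₂*b + x^2*U^2*V^2*r₁*c + x^2*U^2*V^2*r₁*ρ₂*c + x^2*U^2*V^2*r₁*ρ₂*b + x^2*U^2*V^2*r₁*ρ₁*c + x^2*U^2*V^2*r₁*ρ₁*b + (-4)*x^2*U^2*V^2*r₁*ρ₁*ρ₂*b + (-2)*x^2*U^2*V^2*r₁*r₂*c + (-2)*x^2*U^2*V^2*r₁*r₂*ρ₂*c + (-2)*x^2*U^2*V^2*r₁*r₂*ρ₁*c + (1/2 : ℝ)*x^2*U^2*V^2*S*c + (1/2 : ℝ)*x^2*U^2*V^2*S*ρ₂*c + (1/2 : ℝ)*x^2*U^2*V^2*S*ρ₁*c - x^2*U^2*V^2*S*r₂*c - x^2*U^2*V^2*S*r₂*ρ₂*c - x^2*U^2*V^2*S*r₂*ρ₁*c - x^2*U^2*V^2*S*r₁*c - x^2*U^2*V^2*S*r₁*ρ₂*c - x^2*U^2*V^2*S*r₁*ρ₁*c + (2)*x^2*U^2*V^2*S*r₁*r₂*c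 + (2)*x^2*U^2*V^2*S*r₁*r₂*ρ₂*c + (2)*x^2*U^2*V^2*S*r₁*r₂*ρ₁*c + (-7/2 : ℝ)*x^3*U^2*V^2*c + (1/2 : ℝ)*x^3*U^2*V^2*b + (-3)*x^3*U^2*V^2*ρ₂*c - x^3*U^2*V^2*ρ₂*b + (-3)*x^3*U^2*V^2*ρ₁*c - x^3*U^2*V^2*ρ₁*b + (-2)*x^3*U^2*V^2*ρ₁*ρ₂*b + (5)*x^3*U^2*V^2*r₂*c - x^3*U^2*V^2*r₂*b + (4)*x^3*U^2*V^2*r₂*ρ₂*c + (4)*x^3*U^2*V^2*r₂*ρ₂*b + (4)*x^3*U^2*V^2*r₂*ρ₁*c + (4)*x^3*U^2*V^2*r₂*ρ₁*b + (-4)*x^3*U^2*V^2*r₂*ρ₁*ρ₂*b + (5)*x^3*U^2*V^2*r₁*c - x^3*U^2*V^2*r₁*b + (4)*x^3*U^2*V^2*r₁*ρ₂*c + (4)*x^3*U^2*V^2*r₁*ρ₂*b + (4)*x^3*U^2*V^2*r₁*ρ₁*c + (4)*x^3*U^2*V^2*r₁*ρ₁*b + (-4)*x^3*U^2*V^2*r₁*ρ₁*ρ₂*b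 + (-6)*x^3*U^2*V^2*r₁*r₂*c + (-4)*x^3*U^2*V^2*r₁*r₂*ρ₂*c + (-4)*x^3*U^2*V^2*r₁*r₂*ρ₁*c + (4)*x^3*U^2*V^2*S*c + (7/2 : ℝ)*x^3*U^2*V^2*S*ρ₂*c + (7/2 : ℝ)*x^3*U^2*V^2*S*ρ₁*c + (-6)*x^3*U^2*V^2*S*r₂*c + (-5)*x^3*U^2*V^2*S*r₂*ρ₂*c + (-5)*x^3*U^2*V^2*S*r₂*ρ₁*c + (-6)*x^3*U^2*V^2*S*r₁*c + (-5)*x^3*U^2*V^2*S*r₁*ρ₂*c + (-5)*x^3*U^2*V^2*S*r₁*ρ₁*c + (8)*x^3*U^2*V^2*S*r₁*r₂*c + (6)*x^3*U^2*V^2*S*r₁*r₂*ρ₂*c + (6)*x^3*U^2*V^2*S*r₁*r₂*ρ₁*c + (-9)*x^4*U^2*V^2*c + x^4*U^2*V^2*b + (-6)*x^4*U^2*V^2*ρ₂*c + (2)*x^4*U^2*V^2*ρ₂*b + (-6)*x^4*U^2*V^2*ρ₁*c + (2)*x^4*U^2*V^2*ρ₁*b + (-4)*x^4*U^2*V^2*ρ₁*ρ₂*b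 + (8)*x^4*U^2*V^2*r₂*c + (-4)*x^4*U^2*V^2*r₂*b + (4)*x^4*U^2*V^2*r₂*ρ₂*c + (4)*x^4*U^2*V^2*r₂*ρ₂*b + (4)*x^4*U^2*V^2*r₂*ρ₁*c + (4)*x^4*U^2*V^2*r₂*ρ₁*b + (8)*x^4*U^2*V^2*r₁*c + (-4)*x^4*U^2*V^2*r₁*b + (4)*x^4*U^2*V^2*r₁*ρ₂*c + (4)*x^4*U^2*V^2*r₁*ρ₂*b + (4)*x^4*U^2*V^2*r₁*ρ₁*c + (4)*x^4*U^2*V^2*r₁*ρ₁*b + (-4)*x^4*U^2*V^2*r₁*r₂*c + (25/2 : ℝ)*x^4*U^2*V^2*S*c + (9)*x^4*U^2*V^2*S*ρ₂*c + (9)*x^4*U^2*V^2*S*ρ₁*c + (-13)*x^4*U^2*V^2*S*r₂*c + (-8)*x^4*U^2*V^2*S*r₂*ρ₂*c + (-8)*x^4*U^2*V^2*S*r₂*ρ₁*c + (-13)*x^4*U^2*V^2*S*r₁*c + (-8)*x^4*U^2*V^2*S*r₁*ρ₂*c + (-8)*x^4*U^2*V^2*S*r₁*ρ₁*c + (10)*x^4*U^2*V^2*S*r₁*r₂*c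 + (4)*x^4*U^2*V^2*S*r₁*r₂*ρ₂*c + (4)*x^4*U^2*V^2*S*r₁*r₂*ρ₁*c + (-10)*x^5*U^2*V^2*c + (-2)*x^5*U^2*V^2*b + (-4)*x^5*U^2*V^2*ρ₂*c + (4)*x^5*U^2*V^2*ρ₂*b + (-4)*x^5*U^2*V^2*ρ₁*c + (4)*x^5*U^2*V^2*ρ₁*b + (4)*x^5*U^2*V^2*r₂*c + (-4)*x^5*U^2*V^2*r₂*b + (4)*x^5*U^2*V^2*r₁*c + (-4)*x^5*U^2*V^2*r₁*b + (19)*x^5*U^2*V^2*S*c + (10)*x^5*U^2*V^2*S*ρ₂*c + (10)*x^5*U^2*V^2*S*ρ₁*c + (-12)*x^5*U^2*V^2*S*r₂*c + (-4)*x^5*U^2*V^2*S*r₂*ρ₂*c + (-4)*x^5*U^2*V^2*S*r₂*ρ₁*c + (-12)*x^5*U^2*V^2*S*r₁*c + (-4)*x^5*U^2*V^2*S*r₁*ρ₂*c + (-4)*x^5*U^2*V^2*S*r₁*ρ₁*c + (4)*x^5*U^2*V^2*S*r₁*r₂*c + (-4)*x^6*U^2*V^2*c + (-4)*x^6*U^2*V^2*b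 + (14)*x^6*U^2*V^2*S*c + (4)*x^6*U^2*V^2*S*ρ₂*c + (4)*x^6*U^2*V^2*S*ρ₁*c + (-4)*x^6*U^2*V^2*S*r₂*c + (-4)*x^6*U^2*V^2*S*r₁*c + (4)*x^7*U^2*V^2*S*c) * hw + ((1/2 : ℝ)*x^2*U^2*V^2*W*c + (1/2 : ℝ)*x^2*U^2*V^2*W*ρ₂*c + (1/2 : ℝ)*x^2*U^2*V^2*W*ρ₁*c - x^2*U^2*V^2*W*r₂*c - x^2*U^2*V^2*W*r₂*ρ₂*c - x^2*U^2*V^2*W*r₂*ρ₁*c - x^2*U^2*V^2*W*r₁*c - x^2*U^2*V^2*W*r₁*ρ₂*c - x^2*U^2*V^2*W*r₁*ρ₁*c + (2)*x^2*U^2*V^2*W*r₁*r₂*c + (2)*x^2*U^2*V^2*W*r₁*r₂*ρ₂*c + (2)*x^2*U^2*V^2*W*r₁*r₂*ρ₁*c + (5/2 : ℝ)*x^3*U^2*V^2*W*c + (2)*x^3*U^2*V^2*W*ρ₂*c + (2)*x^3*U^2*V^2*W*ρ₁*c + (-3)*x^3*U^2*V^2*W*r₂*c + (-2)*x^3*U^2*V^2*W*r₂*ρ₂*c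 + (-2)*x^3*U^2*V^2*W*r₂*ρ₁*c + (-3)*x^3*U^2*V^2*W*r₁*c + (-2)*x^3*U^2*V^2*W*r₁*ρ₂*c + (-2)*x^3*U^2*V^2*W*r₁*ρ₁*c + (2)*x^3*U^2*V^2*W*r₁*r₂*c + (2)*x^4*U^2*V^2*W*c + (2)*x^4*U^2*V^2*W*r₂*c + (4)*x^4*U^2*V^2*W*r₂*ρ₂*c + (4)*x^4*U^2*V^2*W*r₂*ρ₁*c + (2)*x^4*U^2*V^2*W*r₁*c + (4)*x^4*U^2*V^2*W*r₁*ρ₂*c + (4)*x^4*U^2*V^2*W*r₁*ρ₁*c + (-8)*x^4*U^2*V^2*W*r₁*r₂*c + (-8)*x^4*U^2*V^2*W*r₁*r₂*ρ₂*c + (-8)*x^4*U^2*V^2*W*r₁*r₂*ρ₁*c + (-8)*x^5*U^2*V^2*W*c + (-8)*x^5*U^2*V^2*W*ρ₂*c + (-8)*x^5*U^2*V^2*W*ρ₁*c + (12)*x^5*U^2*V^2*W*r₂*c + (8)*x^5*U^2*V^2*W*r₂*ρ₂*c + (8)*x^5*U^2*V^2*W*r₂*ρ₁*c + (12)*x^5*U^2*V^2*W*r₁*c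 + (8)*x^5*U^2*V^2*W*r₁*ρ₂*c + (8)*x^5*U^2*V^2*W*r₁*ρ₁*c + (-8)*x^5*U^2*V^2*W*r₁*r₂*c + (-16)*x^6*U^2*V^2*W*c + (-8)*x^6*U^2*V^2*W*ρ₂*c + (-8)*x^6*U^2*V^2*W*ρ₁*c + (8)*x^6*U^2*V^2*W*r₂*c + (8)*x^6*U^2*V^2*W*r₁*c + (-8)*x^7*U^2*V^2*W*c) * hs
end

section
/- Let Pₙ be monic polynomials satisfying P_{n+1}(x) + (θ - Aₙ - Cₙ)Pₙ(x) + CₙA_{n-1}P_{n-1}(x) = x Pₙ(x) with P₀=1, P₁(x)=x-θ+A₀, where A_{n-1}>0, Cₙ>0 for n≥1 and C₀=0. Then Pₙ(θ) = A₀A₁⋯A_{n-1} ≠ 0 and Aₙ = P_{n+1}(θ)/Pₙ(θ); the polynomials P̃ₙ(x) = (P_{n+1}(x) - AₙPₙ(x))/(x-θ) are monic of degree n and satisfy P̃_{n+1}(x) + (θ - Aₙ - C_{n+1})P̃ₙ(x) + CₙAₙ P̃_{n-1}(x) = x P̃ₙ(x); moreover Pₙ(x) = P̃ₙ(x) - Cₙ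 P̃_{n-1}(x). -/
open Polynomial Finset

/-!
Evaluating the recurrence at `x = θ` gives
`Pₙ₊₁(θ) - Aₙ Pₙ(θ) = Cₙ (Pₙ(θ) - Aₙ₋₁ Pₙ₋₁(θ))`, and the bracket vanishes for `n = 0`, so
`Pₙ(θ) = A₀ ⋯ Aₙ₋₁`. Hence `θ` is a root of `Pₙ₊₁ - Aₙ Pₙ` and `P̃ₙ` is an exact quotient.
After multiplication by `x - θ`, the recurrence for `P̃ₙ` is the recurrence for `Pₙ₊₁` minus `Aₙ`
times the one for `Pₙ`, and `Pₙ = P̃ₙ - Cₙ P̃ₙ₋₁` is the recurrence for `Pₙ` itself; the factor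
`x - θ` cancels because it is monic.
-/

namespace Polynomial

variable {R : Type*} [CommRing R]

theorem Monic.sub_C_mul_of_natDegree_lt {p q : R[X]} (hp : p.Monic)
    (hqp : q.natDegree < p.natDegree) (a : R) :
    (p - C a * q).Monic ∧ (p - C a * q).natDegree = p.natDegree := by
  have hlt : (C a * q).natDegree < p.natDegree := (natDegree_C_mul_le a q).trans_lt hqp
  exact ⟨hp.sub_of_left (degree_lt_degree hlt), natDegree_sub_eq_left_of_natDegree_lt hlt⟩

theorem Monic.divByMonic_X_sub_C [Nontrivial R] {p : R[X]} {n : ℕ} (hp : p.Monic)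
    (hpn : p.natDegree = n + 1) (θ : R) :
    (p /ₘ (X - C θ)).Monic ∧ (p /ₘ (X - C θ)).natDegree = n := by
  have hdeg : (X - C θ).degree ≤ p.degree := by
    rw [degree_X_sub_C, degree_eq_natDegree hp.ne_zero, hpn]
    exact_mod_cast n.succ_pos
  refine ⟨?_, ?_⟩
  · rw [Monic, leadingCoeff_divByMonic_of_monic (monic_X_sub_C θ) hdeg, hp.leadingCoeff]
  · rw [natDegree_divByMonic p (monic_X_sub_C θ), natDegree_X_sub_C, hpn, Nat.add_sub_cancel]

end Polynomial

section ACRecurrence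

variable {R : Type*} [CommRing R] {θ : R} {A C : ℕ → R} {P : ℕ → R[X]}

def ACRecurrence (θ : R) (A C : ℕ → R) (P : ℕ → R[X]) : Prop :=
  ∀ n, 1 ≤ n → P (n + 1) + Polynomial.C (θ - A n - C n) * P n
    + Polynomial.C (C n * A (n - 1)) * P (n - 1) = X * P n

/-- The paper's `P̃ₙ`. Since `/ₘ` drops the remainder, this is the exact quotient
`(Pₙ₊₁ - Aₙ Pₙ) / (x - θ)` only when `θ` is a root of the numerator. -/
noncomputable def christoffelTransform (θ : R) (A : ℕ → R) (P : ℕ → R[X]) (n : ℕ) : R[X] :=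
  (P (n + 1) - Polynomial.C (A n) * P n) /ₘ (X - Polynomial.C θ)

theorem ACRecurrence.eval_eq_prod (hrec : ACRecurrence θ A C P) (hP0 : P 0 = 1)
    (hP1 : P 1 = X - Polynomial.C (θ - A 0)) (n : ℕ) :
    (P n).eval θ = ∏ j ∈ range n, A j := by
  induction n using Nat.twoStepInduction with
  | zero => simp [hP0]
  | one => simp [hP1]
  | more n ih₀ ih₁ =>
    have h := congrArg (eval θ) (hrec (n + 1) n.succ_pos)
    simp only [eval_add, eval_mul, eval_C, eval_X, Nat.add_sub_cancel, ih₀, ih₁,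
      prod_range_succ] at h ⊢
    linear_combination h

theorem X_sub_C_mul_christoffelTransform
    (heval : ∀ n, (P n).eval θ = ∏ j ∈ range n, A j) (n : ℕ) :
    (X - Polynomial.C θ) * christoffelTransform θ A P n = P (n + 1) - Polynomial.C (A n) * P n :=
  mul_divByMonic_eq_iff_isRoot.mpr <| by
    simp only [IsRoot, eval_sub, eval_mul, eval_C, heval, prod_range_succ]
    ring

theorem christoffelTransform_monic [Nontrivial R]
    (hmonic : ∀ n, (P n).Monic ∧ (P n).natDegree = n) (n : ℕ) :
    (christoffelTransform θ A P n).Monic ∧ (christoffelTransform θ A P n).natDegree = n := by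
  obtain ⟨hnum, hnum_deg⟩ := (hmonic (n + 1)).1.sub_C_mul_of_natDegree_lt
    (by rw [(hmonic n).2, (hmonic (n + 1)).2]; exact n.lt_succ_self) (A n)
  exact hnum.divByMonic_X_sub_C (hnum_deg.trans (hmonic (n + 1)).2) θ

theorem ACRecurrence.christoffelTransform_rec (hrec : ACRecurrence θ A C P)
    (heval : ∀ n, (P n).eval θ = ∏ j ∈ range n, A j) :
    ∀ n, 1 ≤ n → christoffelTransform θ A P (n + 1)
      + Polynomial.C (θ - A n - C (n + 1)) * christoffelTransform θ A P n
      + Polynomial.C (C n * A n) * christoffelTransform θ A P (n - 1)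
      = X * christoffelTransform θ A P n := by
  intro n hn
  obtain ⟨m, rfl⟩ := Nat.exists_eq_add_of_le' hn
  apply (monic_X_sub_C θ).isRegular.left
  have e₂ := hrec (m + 2) (by omega)
  have e₁ := hrec (m + 1) (by omega)
  simp only [Nat.add_sub_cancel, show m + 2 - 1 = m + 1 from rfl, map_sub, map_mul] at e₁ e₂ ⊢
  simp only [mul_add, mul_left_comm (X - Polynomial.C θ),
    X_sub_C_mul_christoffelTransform heval]
  linear_combination e₂ - Polynomial.C (A (m + 1)) * e₁

theorem ACRecurrence.eq_christoffelTransform_sub (hrec : ACRecurrence θ A C P)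
    (heval : ∀ n, (P n).eval θ = ∏ j ∈ range n, A j) :
    ∀ n, 1 ≤ n → P n = christoffelTransform θ A P n
      - Polynomial.C (C n) * christoffelTransform θ A P (n - 1) := by
  intro n hn
  obtain ⟨m, rfl⟩ := Nat.exists_eq_add_of_le' hn
  apply (monic_X_sub_C θ).isRegular.left
  have e₁ := hrec (m + 1) (by omega)
  simp only [Nat.add_sub_cancel, map_sub, map_mul] at e₁ ⊢
  simp only [mul_sub, mul_left_comm (X - Polynomial.C θ),
    X_sub_C_mul_christoffelTransform heval]
  linear_combination -e₁

end ACRecurrence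

theorem stmt10_general (θ : ℝ) (A C : ℕ → ℝ) (P : ℕ → Polynomial ℝ)
    (hA : ∀ n, 0 < A n)
    (hP0 : P 0 = 1) (hP1 : P 1 = X - Polynomial.C (θ - A 0))
    (hmonic : ∀ n, (P n).Monic ∧ (P n).natDegree = n)
    (hrec : ∀ n, 1 ≤ n →
      P (n + 1) + Polynomial.C (θ - A n - C n) * P n
        + Polynomial.C (C n * A (n - 1)) * P (n - 1) = X * P n) :
    (∀ n, (P n).eval θ = ∏ j ∈ range n, A j) ∧
    (∀ n, (P n).eval θ ≠ 0) ∧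
    (∀ n, A n = (P (n + 1)).eval θ / (P n).eval θ) ∧
    ∃ Pt : ℕ → Polynomial ℝ,
      (∀ n, (X - Polynomial.C θ) * Pt n = P (n + 1) - Polynomial.C (A n) * P n) ∧
      (∀ n, (Pt n).Monic ∧ (Pt n).natDegree = n) ∧
      (∀ n, 1 ≤ n →
        Pt (n + 1) + Polynomial.C (θ - A n - C (n + 1)) * Pt n
          + Polynomial.C (C n * A n) * Pt (n - 1) = X * Pt n) ∧
      (∀ n, 1 ≤ n → P n = Pt n - Polynomial.C (C n) * Pt (n - 1)) := by
  replace hrec : ACRecurrence θ A C P := hrec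
  have heval := hrec.eval_eq_prod hP0 hP1
  have hne : ∀ n, (P n).eval θ ≠ 0 := fun n => heval n ▸ (prod_pos fun j _ => hA j).ne'
  refine ⟨heval, hne, fun n => ?_, christoffelTransform θ A P,
    X_sub_C_mul_christoffelTransform heval, christoffelTransform_monic hmonic,
    hrec.christoffelTransform_rec heval, hrec.eq_christoffelTransform_sub heval⟩
  rw [eq_div_iff (hne n), heval, heval, prod_range_succ, mul_comm]

/-- The Karlin–McGregor / Christoffel transformation lemma for monic orthogonal
polynomials written in the A,C-form of the three-term recurrence. -/
theorem stmt10 (θ : ℝ) (A C : ℕ → ℝ) (P : ℕ → Polynomial ℝ)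
    (hA : ∀ n, 0 < A n) (hC : ∀ n, 1 ≤ n → 0 < C n) (hC0 : C 0 = 0)
    (hP0 : P 0 = 1) (hP1 : P 1 = X - Polynomial.C (θ - A 0))
    (hmonic : ∀ n, (P n).Monic ∧ (P n).natDegree = n)
    (hrec : ∀ n, 1 ≤ n →
      P (n + 1) + Polynomial.C (θ - A n - C n) * P n
        + Polynomial.C (C n * A (n - 1)) * P (n - 1) = X * P n) :
    (∀ n, (P n).eval θ = ∏ j ∈ range n, A j) ∧
    (∀ n, (P n).eval θ ≠ 0) ∧
    (∀ n, A n = (P (n + 1)).eval θ / (P n).eval θ) ∧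
    ∃ Pt : ℕ → Polynomial ℝ,
      (∀ n, (X - Polynomial.C θ) * Pt n = P (n + 1) - Polynomial.C (A n) * P n) ∧
      (∀ n, (Pt n).Monic ∧ (Pt n).natDegree = n) ∧
      (∀ n, 1 ≤ n →
        Pt (n + 1) + Polynomial.C (θ - A n - C (n + 1)) * Pt n
          + Polynomial.C (C n * A n) * Pt (n - 1) = X * Pt n) ∧
      (∀ n, 1 ≤ n → P n = Pt n - Polynomial.C (C n) * Pt (n - 1)) :=
  stmt10_general θ A C P hA hP0 hP1 hmonic hrec
end

section
/- Let Sₙ be monic polynomials satisfying S_{n+1}(x) + (-1)ⁿχ Sₙ(x) + vₙ S_{n-1}(x) = x Sₙ(x), S₀=1. Define Pₙ(y) and P̃ₙ(y) by S₂ₙ(x) = Pₙ(x²) and S₂ₙ₊₁(x) = (x-χ)P̃ₙ(x²). Then Pₙ, P̃ₙ are well-defined monic polynomials of degree n, and they satisfy the three-term recurrences P_{n+1}(y) + (χ² - Aₙ - Cₙ)Pₙ(y) + CₙA_{n-1}P_{n-1}(y) = y Pₙ(y) and P̃_{n+1}(y) + (χ² - Aₙ - C_{n+1})P̃ₙ(y)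 + CₙAₙP̃_{n-1}(y) = y P̃ₙ(y), where Cₙ = -v₂ₙ and Aₙ = -v₂ₙ₊₁. -/
open Polynomial

/-- Auxiliary mutual recursion producing the pair (Pₙ, P̃ₙ). -/
noncomputable def chiharaPair (χ : ℝ) (v : ℕ → ℝ) : ℕ → Polynomial ℝ × Polynomial ℝ :=
  fun n => Nat.rec ((1 : Polynomial ℝ), (1 : Polynomial ℝ))
    (fun m p =>
      ((X - C (χ ^ 2)) * p.2 - C (v (2 * m + 1)) * p.1,
        (X - C (χ ^ 2)) * p.2 - C (v (2 * m + 1)) * p.1 - C (v (2 * m + 2)) * p.2)) n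

lemma chiharaPair_zero (χ : ℝ) (v : ℕ → ℝ) : chiharaPair χ v 0 = (1, 1) := rfl

lemma chiharaPair_succ_fst (χ : ℝ) (v : ℕ → ℝ) (m : ℕ) :
    (chiharaPair χ v (m + 1)).1 =
      (X - C (χ ^ 2)) * (chiharaPair χ v m).2 - C (v (2 * m + 1)) * (chiharaPair χ v m).1 := rfl

lemma chiharaPair_succ_snd (χ : ℝ) (v : ℕ → ℝ) (m : ℕ) :
    (chiharaPair χ v (m + 1)).2 =
      (chiharaPair χ v (m + 1)).1 - C (v (2 * m + 2)) * (chiharaPair χ v m).2 := rfl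

/-- Chihara's correspondence between a recurrence of type
S_{n+1} + (-1)ⁿχSₙ + vₙS_{n-1} = xSₙ and a pair of related monic orthogonal
polynomial systems Pₙ, P̃ₙ with S₂ₙ(x) = Pₙ(x²), S₂ₙ₊₁(x) = (x-χ)P̃ₙ(x²),
Cₙ = -v₂ₙ, Aₙ = -v₂ₙ₊₁. -/
theorem stmt11 (χ : ℝ) (v : ℕ → ℝ) (S : ℕ → Polynomial ℝ)
    (hS0 : S 0 = 1) (hS1 : S 1 = X - Polynomial.C χ)
    (hmonic : ∀ n, (S n).Monic ∧ (S n).natDegree = n)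
    (hrec : ∀ n, 1 ≤ n →
      S (n + 1) + Polynomial.C ((-1 : ℝ) ^ n * χ) * S n
        + Polynomial.C (v n) * S (n - 1) = X * S n) :
    ∃ P Pt : ℕ → Polynomial ℝ,
      (∀ n, (P n).Monic ∧ (P n).natDegree = n ∧ (Pt n).Monic ∧ (Pt n).natDegree = n) ∧
      (∀ n, S (2 * n) = (P n).comp (X ^ 2)) ∧
      (∀ n, S (2 * n + 1) = (X - Polynomial.C χ) * (Pt n).comp (X ^ 2)) ∧
      (∀ n, 1 ≤ n →
        P (n + 1) + Polynomial.C (χ ^ 2 - (-v (2 * n + 1)) - (-v (2 * n))) * P n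
          + Polynomial.C ((-v (2 * n)) * (-v (2 * n - 1))) * P (n - 1) = X * P n) ∧
      (∀ n, 1 ≤ n →
        Pt (n + 1) + Polynomial.C (χ ^ 2 - (-v (2 * n + 1)) - (-v (2 * n + 2))) * Pt n
          + Polynomial.C ((-v (2 * n)) * (-v (2 * n + 1))) * Pt (n - 1) = X * Pt n) := by
  set P : ℕ → Polynomial ℝ := fun n => (chiharaPair χ v n).1 with hP
  set Pt : ℕ → Polynomial ℝ := fun n => (chiharaPair χ v n).2 with hPt
  -- The comp identities, by induction on n.
  have key : ∀ n, S (2 * n) = (P n).comp (X ^ 2) ∧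
      S (2 * n + 1) = (X - Polynomial.C χ) * (Pt n).comp (X ^ 2) := by
    intro n
    induction n with
    | zero =>
      constructor
      · rw [hS0]; simp [hP, chiharaPair_zero]
      · rw [hS1]; simp [hPt, chiharaPair_zero]
    | succ m ih =>
      obtain ⟨ih1, ih2⟩ := ih
      -- S (2m+2) from the recurrence at n = 2m+1
      have hodd : ((-1 : ℝ)) ^ (2 * m + 1) = -1 := Odd.neg_one_pow ⟨m, by ring⟩
      have h1 := hrec (2 * m + 1) (by omega)
      rw [hodd, show (-1 * χ : ℝ) = -χ by ring, map_neg] at h1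
      have e1 : (2 * m + 1 - 1) = 2 * m := by omega
      rw [e1] at h1
      have hS2 : S (2 * m + 1 + 1) =
          X * S (2 * m + 1) + Polynomial.C χ * S (2 * m + 1)
            - Polynomial.C (v (2 * m + 1)) * S (2 * m) := by
        linear_combination h1
      have heven : S (2 * (m + 1)) = (P (m + 1)).comp (X ^ 2) := by
        have e2 : 2 * (m + 1) = 2 * m + 1 + 1 := by omega
        rw [e2, hS2, ih1, ih2]
        simp only [hP, hPt, chiharaPair_succ_fst, sub_comp, mul_comp, pow_comp, X_comp, pow_comp, C_comp, C_pow]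
        ring
      refine ⟨heven, ?_⟩
      -- S (2m+3) from the recurrence at n = 2m+2
      have hev : ((-1 : ℝ)) ^ (2 * m + 2) = 1 := Even.neg_one_pow ⟨m + 1, by ring⟩
      have h2 := hrec (2 * m + 2) (by omega)
      rw [hev, one_mul] at h2
      have e3 : (2 * m + 2 - 1) = 2 * m + 1 := by omega
      rw [e3] at h2
      have hS3 : S (2 * m + 2 + 1) =
          X * S (2 * m + 2) - Polynomial.C χ * S (2 * m + 2)
            - Polynomial.C (v (2 * m + 2)) * S (2 * m + 1) := by
        linear_combination h2
      have e4 : 2 * (m + 1) + 1 = 2 * m + 2 + 1 := by omega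
      have e5 : 2 * (m + 1) = 2 * m + 2 := by omega
      rw [e4, hS3, ← e5, heven, ih2]
      simp only [hP, hPt, chiharaPair_succ_snd, chiharaPair_succ_fst, sub_comp, mul_comp,
        X_comp, pow_comp, C_comp, C_pow]
      ring
  refine ⟨P, Pt, ?_, fun n => (key n).1, fun n => (key n).2, ?_, ?_⟩
  · -- monicity and degrees
    intro n
    have hX2 : (X ^ 2 : Polynomial ℝ).natDegree = 2 := by simp
    have hX2l : (X ^ 2 : Polynomial ℝ).leadingCoeff = 1 := by
      simpa using (monic_X_pow 2 : (X ^ 2 : Polynomial ℝ).Monic)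
    -- P n
    have h1 := (hmonic (2 * n)).1
    have h2 := (hmonic (2 * n)).2
    rw [(key n).1] at h1 h2
    rw [natDegree_comp, hX2] at h2
    have hPdeg : (P n).natDegree = n := by omega
    have hPmon : (P n).Monic := by
      have := leadingCoeff_comp (p := P n) (q := (X ^ 2 : Polynomial ℝ)) (by omega)
      rw [hX2l, one_pow, mul_one] at this
      rw [Monic] at h1 ⊢
      rw [← this]; exact h1
    -- Pt n
    have h3 := (hmonic (2 * n + 1)).1
    have h4 := (hmonic (2 * n + 1)).2
    rw [(key n).2] at h3 h4
    have hcompne : (Pt n).comp (X ^ 2) ≠ 0 := by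
      intro h
      rw [h] at h3
      simp [Monic] at h3
    have hXCm : (X - Polynomial.C χ).Monic := monic_X_sub_C χ
    rw [natDegree_mul hXCm.ne_zero hcompne, natDegree_comp, hX2,
      natDegree_X_sub_C] at h4
    have hPtdeg : (Pt n).natDegree = n := by omega
    have hPtmon : (Pt n).Monic := by
      have hlc := leadingCoeff_comp (p := Pt n) (q := (X ^ 2 : Polynomial ℝ)) (by omega)
      rw [hX2l, one_pow, mul_one] at hlc
      rw [Monic, leadingCoeff_mul, hXCm.leadingCoeff, one_mul, hlc] at h3
      exact h3
    exact ⟨hPmon, hPdeg, hPtmon, hPtdeg⟩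
  · -- recurrence for P
    rintro (_ | k) hn
    · omega
    have i1 : 2 * (k + 1) + 1 = 2 * k + 3 := by omega
    have i2 : 2 * (k + 1) = 2 * k + 2 := by omega
    have i3 : 2 * (k + 1) - 1 = 2 * k + 1 := by omega
    have i4 : 2 * k + 2 - 1 = 2 * k + 1 := by omega
    have i5 : 2 * k + 1 + 1 = 2 * k + 2 := by omega
    have i6 : 2 * k + 2 + 1 = 2 * k + 3 := by omega
    simp only [hP, hPt, Nat.add_sub_cancel, i1, i2, i3, i4]
    rw [chiharaPair_succ_fst (m := k + 1), chiharaPair_succ_snd (m := k),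
      chiharaPair_succ_fst (m := k)]
    simp only [i1, i2, i3, i4, i5, i6, map_sub, map_add, map_mul, map_neg, C_pow]
    ring
  · -- recurrence for Pt
    rintro (_ | k) hn
    · omega
    have i1 : 2 * (k + 1) + 1 = 2 * k + 3 := by omega
    have i2 : 2 * (k + 1) = 2 * k + 2 := by omega
    have i3 : 2 * (k + 1) + 2 = 2 * k + 4 := by omega
    have i5 : 2 * k + 1 + 1 = 2 * k + 2 := by omega
    have i6 : 2 * k + 2 + 1 = 2 * k + 3 := by omega
    have i7 : 2 * k + 2 + 2 = 2 * k + 4 := by omega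
    simp only [hP, hPt, Nat.add_sub_cancel, i1, i2, i3]
    rw [chiharaPair_succ_snd (m := k + 1), chiharaPair_succ_fst (m := k + 1),
      chiharaPair_succ_snd (m := k), chiharaPair_succ_fst (m := k)]
    simp only [i1, i2, i3, i5, i6, i7, map_sub, map_add, map_mul, map_neg, C_pow]
    ring
end

section
/- Let F(x) = (x-ρ₁)(x-ρ₂)/(2x) and G(x) = (x-r₁+1/2)(x-r₂+1/2)/(2x+1), and let φ(x) be defined (where the Gamma factors are finite) by φ(x) = σ(x)·Γ(ρ₁-x)Γ(ρ₁+1+x)Γ(ρ₂-x)Γ(ρ₂+1+x) / (Γ(r₂+1/2+x)Γ(r₂+1/2-x)Γ(r₁+1/2+x)Γ(r₁+1/2-x)) where σ is any function satisfying σ(x+1)=σ(x) and σ(-x)=-σ(x). Then φ satisfies the symmetrization conditions φ(-x)F(-x) = φ(x)F(x) and φ(-x-1)G(-x-1) = φ(x)G(x). -/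
/-- The symmetry factor φ for the Bannai–Ito operator. -/
noncomputable def biWeight (σ : ℝ → ℝ) (r₁ r₂ ρ₁ ρ₂ x : ℝ) : ℝ :=
  σ x * (Real.Gamma (ρ₁ - x) * Real.Gamma (ρ₁ + 1 + x)
      * Real.Gamma (ρ₂ - x) * Real.Gamma (ρ₂ + 1 + x)) /
    (Real.Gamma (r₂ + 1/2 + x) * Real.Gamma (r₂ + 1/2 - x)
      * Real.Gamma (r₁ + 1/2 + x) * Real.Gamma (r₁ + 1/2 - x))

private lemma bi_aux (a b c d e f g h : ℝ) (hb : b ≠ 0) (hf : f ≠ 0)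
    (hd : d ≠ 0) (hh : h ≠ 0) (key : a * e * (d * h) = c * g * (b * f)) :
    a / b * (e / f) = c / d * (g / h) := by
  rw [div_mul_div_comm, div_mul_div_comm,
    div_eq_div_iff (mul_ne_zero hb hf) (mul_ne_zero hd hh)]
  linarith [key]

set_option maxHeartbeats 1600000 in
/-- The symmetrization conditions φ(-x)F(-x) = φ(x)F(x) and
φ(-x-1)G(-x-1) = φ(x)G(x), for any 1-periodic odd function σ, at points where
all the Gamma factors are defined. -/
theorem stmt12 (r₁ r₂ ρ₁ ρ₂ : ℝ) (σ : ℝ → ℝ)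
    (hper : ∀ x : ℝ, σ (x + 1) = σ x) (hodd : ∀ x : ℝ, σ (-x) = -σ x)
    (x : ℝ) (hx0 : x ≠ 0) (hx1 : 2 * x + 1 ≠ 0)
    (hdef : ∀ z ∈ ({ρ₁ - x, ρ₁ + x, ρ₁ + 1 + x, ρ₁ + 1 - x,
        ρ₂ - x, ρ₂ + x, ρ₂ + 1 + x, ρ₂ + 1 - x,
        r₁ + 1/2 + x, r₁ + 1/2 - x, r₁ - 1/2 - x, r₁ + 3/2 + x,
        r₂ + 1/2 + x, r₂ + 1/2 - x, r₂ - 1/2 - x, r₂ + 3/2 + x} : Set ℝ),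
      ∀ n : ℕ, z ≠ -(n : ℝ)) :
    biWeight σ r₁ r₂ ρ₁ ρ₂ (-x) * biF ρ₁ ρ₂ (-x) =
      biWeight σ r₁ r₂ ρ₁ ρ₂ x * biF ρ₁ ρ₂ x ∧
    biWeight σ r₁ r₂ ρ₁ ρ₂ (-x - 1) * biG r₁ r₂ (-x - 1) =
      biWeight σ r₁ r₂ ρ₁ ρ₂ x * biG r₁ r₂ x := by

  -- abbreviations for Gamma values and their properties
  have key : ∀ z ∈ ({ρ₁ - x, ρ₁ + x, ρ₁ + 1 + x, ρ₁ + 1 - x,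
        ρ₂ - x, ρ₂ + x, ρ₂ + 1 + x, ρ₂ + 1 - x,
        r₁ + 1/2 + x, r₁ + 1/2 - x, r₁ - 1/2 - x, r₁ + 3/2 + x,
        r₂ + 1/2 + x, r₂ + 1/2 - x, r₂ - 1/2 - x, r₂ + 3/2 + x} : Set ℝ),
      Real.Gamma z ≠ 0 ∧ z ≠ 0 := by
    intro z hz
    refine ⟨Real.Gamma_ne_zero (hdef z hz), ?_⟩
    have := hdef z hz 0
    simpa using this
  have mem : ∀ z : ℝ, z ∈ ({ρ₁ - x, ρ₁ + x, ρ₁ + 1 + x, ρ₁ + 1 - x,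
        ρ₂ - x, ρ₂ + x, ρ₂ + 1 + x, ρ₂ + 1 - x,
        r₁ + 1/2 + x, r₁ + 1/2 - x, r₁ - 1/2 - x, r₁ + 3/2 + x,
        r₂ + 1/2 + x, r₂ + 1/2 - x, r₂ - 1/2 - x, r₂ + 3/2 + x} : Set ℝ) ↔
      z = ρ₁ - x ∨ z = ρ₁ + x ∨ z = ρ₁ + 1 + x ∨ z = ρ₁ + 1 - x ∨
      z = ρ₂ - x ∨ z = ρ₂ + x ∨ z = ρ₂ + 1 + x ∨ z = ρ₂ + 1 - x ∨
      z = r₁ + 1/2 + x ∨ z = r₁ + 1/2 - x ∨ z = r₁ - 1/2 - x ∨ z = r₁ + 3/2 + x ∨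
      z = r₂ + 1/2 + x ∨ z = r₂ + 1/2 - x ∨ z = r₂ - 1/2 - x ∨ z = r₂ + 3/2 + x := by
    intro z; simp [Set.mem_insert_iff]
  obtain ⟨g1, n1⟩ := key (ρ₁ - x) (by rw [mem]; tauto)
  obtain ⟨g2, n2⟩ := key (ρ₁ + x) (by rw [mem]; tauto)
  obtain ⟨g3, n3⟩ := key (ρ₂ - x) (by rw [mem]; tauto)
  obtain ⟨g4, n4⟩ := key (ρ₂ + x) (by rw [mem]; tauto)
  obtain ⟨g5, n5⟩ := key (r₁ + 1/2 + x) (by rw [mem]; tauto)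
  obtain ⟨g6, n6⟩ := key (r₁ + 1/2 - x) (by rw [mem]; tauto)
  obtain ⟨g7, n7⟩ := key (r₁ - 1/2 - x) (by rw [mem]; tauto)
  obtain ⟨g8, n8⟩ := key (r₂ + 1/2 + x) (by rw [mem]; tauto)
  obtain ⟨g9, n9⟩ := key (r₂ + 1/2 - x) (by rw [mem]; tauto)
  obtain ⟨g10, n10⟩ := key (r₂ - 1/2 - x) (by rw [mem]; tauto)
  -- functional equations
  have e1 : Real.Gamma (ρ₁ + 1 + x) = (ρ₁ + x) * Real.Gamma (ρ₁ + x) := by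
    rw [show ρ₁ + 1 + x = (ρ₁ + x) + 1 by ring, Real.Gamma_add_one n2]
  have e2 : Real.Gamma (ρ₁ + 1 - x) = (ρ₁ - x) * Real.Gamma (ρ₁ - x) := by
    rw [show ρ₁ + 1 - x = (ρ₁ - x) + 1 by ring, Real.Gamma_add_one n1]
  have e3 : Real.Gamma (ρ₂ + 1 + x) = (ρ₂ + x) * Real.Gamma (ρ₂ + x) := by
    rw [show ρ₂ + 1 + x = (ρ₂ + x) + 1 by ring, Real.Gamma_add_one n4]
  have e4 : Real.Gamma (ρ₂ + 1 - x) = (ρ₂ - x) * Real.Gamma (ρ₂ - x) := by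
    rw [show ρ₂ + 1 - x = (ρ₂ - x) + 1 by ring, Real.Gamma_add_one n3]
  have e5 : Real.Gamma (r₁ + 3/2 + x) = (r₁ + 1/2 + x) * Real.Gamma (r₁ + 1/2 + x) := by
    rw [show r₁ + 3/2 + x = (r₁ + 1/2 + x) + 1 by ring, Real.Gamma_add_one n5]
  have e6 : Real.Gamma (r₁ + 1/2 - x) = (r₁ - 1/2 - x) * Real.Gamma (r₁ - 1/2 - x) := by
    rw [show r₁ + 1/2 - x = (r₁ - 1/2 - x) + 1 by ring, Real.Gamma_add_one n7]
  have e7 : Real.Gamma (r₂ + 3/2 + x) = (r₂ + 1/2 + x) * Real.Gamma (r₂ + 1/2 + x) := by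
    rw [show r₂ + 3/2 + x = (r₂ + 1/2 + x) + 1 by ring, Real.Gamma_add_one n8]
  have e8 : Real.Gamma (r₂ + 1/2 - x) = (r₂ - 1/2 - x) * Real.Gamma (r₂ - 1/2 - x) := by
    rw [show r₂ + 1/2 - x = (r₂ - 1/2 - x) + 1 by ring, Real.Gamma_add_one n10]
  -- sigma facts
  have s1 : σ (-x) = -σ x := hodd x
  have s2 : σ (-x - 1) = -σ x := by
    have := hper (-x - 1)
    rw [show -x - 1 + 1 = -x by ring] at this
    rw [← this, hodd x]
  constructor
  · unfold biWeight biF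
    rw [show ρ₁ - -x = ρ₁ + x by ring, show ρ₁ + 1 + -x = ρ₁ + 1 - x by ring,
      show ρ₂ - -x = ρ₂ + x by ring, show ρ₂ + 1 + -x = ρ₂ + 1 - x by ring,
      show r₂ + 1/2 + -x = r₂ + 1/2 - x by ring, show r₂ + 1/2 - -x = r₂ + 1/2 + x by ring,
      show r₁ + 1/2 + -x = r₁ + 1/2 - x by ring, show r₁ + 1/2 - -x = r₁ + 1/2 + x by ring,
      s1, e1, e2, e3, e4, e6, e8]
    set A := Real.Gamma (ρ₁ - x)
    set B := Real.Gamma (ρ₁ + x)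
    set C := Real.Gamma (ρ₂ - x)
    set D := Real.Gamma (ρ₂ + x)
    set E := Real.Gamma (r₁ + 1/2 + x)
    set Fv := Real.Gamma (r₁ - 1/2 - x)
    set Gv := Real.Gamma (r₂ + 1/2 + x)
    set H := Real.Gamma (r₂ - 1/2 - x)
    field_simp [g1, g2, g3, g4, g5, g7, g8, g10, n1, n2, n3, n4, n5, n7, n8, n10, hx1]
    ring
  · unfold biWeight biG
    rw [show ρ₁ - (-x - 1) = ρ₁ + 1 + x by ring, show ρ₁ + 1 + (-x - 1) = ρ₁ - x by ring,
      show ρ₂ - (-x - 1) = ρ₂ + 1 + x by ring, show ρ₂ + 1 + (-x - 1) = ρ₂ - x by ring,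
      show r₂ + 1/2 + (-x - 1) = r₂ - 1/2 - x by ring,
      show r₂ + 1/2 - (-x - 1) = r₂ + 3/2 + x by ring,
      show r₁ + 1/2 + (-x - 1) = r₁ - 1/2 - x by ring,
      show r₁ + 1/2 - (-x - 1) = r₁ + 3/2 + x by ring,
      s2, e1, e3, e5, e6, e7, e8,
      show 2 * (-x - 1) + 1 = -(2 * x + 1) by ring]
    apply bi_aux
    · exact mul_ne_zero (mul_ne_zero (mul_ne_zero g10 (mul_ne_zero n8 g8)) g7)
        (mul_ne_zero n5 g5)
    · exact neg_ne_zero.mpr hx1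
    · exact mul_ne_zero (mul_ne_zero (mul_ne_zero g8 (mul_ne_zero n10 g10)) g5)
        (mul_ne_zero n7 g7)
    · exact hx1
    · ring
end
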